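/- arXiv:2407.21064 — 9 statements merged into one kernel-verified Lean document; each statement's English description precedes it below -/
import Mathlib

section
/- For every positive integer n, the central binomial coefficient satisfies C(2n, n) ≤ (4^n / √(π n)) · exp(23/(36n)). -/
/-!
Write `s n = n! / (√(2n) (n/e)^n)` for the Stirling sequence, so that
`C(2n, n) = s(2n) / s(n)² · 4ⁿ / √n`. Robbins' bound
`log s k - log s (k+1) ≤ 1/(12k) - 1/(12(k+1))` makes `log s k - 1/(12k)` increasing, and its
limit is `log √π`; hence `√π ≤ s k ≤ √π · exp (1/(12k))`. Using the upper bound at `2n` and the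
lower bound at `n` gives `C(2n, n) ≤ 4ⁿ / √(πn) · exp (1/(24n))`, and `1/24 ≤ 23/36`.
-/

open Real

namespace Stirling

theorem monotone_log_stirlingSeq_succ_sub :
    Monotone fun k : ℕ => log (stirlingSeq (k + 1)) - 1 / (12 * (k + 1 : ℝ)) := by
  refine monotone_nat_of_le_succ fun k => ?_
  have robbins := log_stirlingSeq_sdiff_le (k + 1)
  have telescope : 1 / (12 * ((k + 1 : ℕ) : ℝ) * ((k + 1 : ℕ) + 1)) =
      1 / (12 * (k + 1 : ℝ)) - 1 / (12 * ((k + 1 : ℕ) + 1 : ℝ)) := by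
    push_cast; field_simp; ring
  rw [telescope] at robbins
  push_cast at robbins ⊢
  linarith

theorem stirlingSeq_le_sqrt_pi_mul_exp {n : ℕ} (hn : n ≠ 0) :
    stirlingSeq n ≤ √π * exp (1 / (12 * n)) := by
  obtain ⟨k, rfl⟩ := Nat.exists_eq_add_one_of_ne_zero hn
  have hlim : Filter.Tendsto (fun k : ℕ => log (stirlingSeq (k + 1)) - 1 / (12 * (k + 1 : ℝ)))
      Filter.atTop (nhds (log √π - 0)) :=
    ((tendsto_stirlingSeq_sqrt_pi.comp (Filter.tendsto_add_atTop_nat 1)).log (by positivity)).sub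
      (tendsto_const_nhds.div_atTop ((tendsto_natCast_atTop_atTop.atTop_add
        tendsto_const_nhds).const_mul_atTop (by norm_num)))
  have hk := monotone_log_stirlingSeq_succ_sub.ge_of_tendsto hlim k
  rw [sub_zero, sub_le_iff_le_add, log_le_iff_le_exp (stirlingSeq'_pos k), exp_add,
    exp_log (by positivity)] at hk
  exact_mod_cast hk

end Stirling

namespace Nat

open Stirling

theorem centralBinom_eq_stirlingSeq {n : ℕ} (hn : n ≠ 0) :
    (centralBinom n : ℝ) = stirlingSeq (2 * n) / stirlingSeq n ^ 2 * (4 ^ n / √n) := by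
  rw [centralBinom_eq_two_mul_choose, cast_choose ℝ (by omega : n ≤ 2 * n),
    show 2 * n - n = n by omega]
  have hsqrt : √(2 * ((2 * n : ℕ) : ℝ)) = 2 * √n := by
    rw [show 2 * ((2 * n : ℕ) : ℝ) = 2 ^ 2 * n by push_cast; ring, sqrt_mul (by positivity),
      sqrt_sq zero_le_two]
  simp only [stirlingSeq, hsqrt]
  field_simp
  rw [sq_sqrt (cast_nonneg n), sq_sqrt (by positivity), pow_mul]
  push_cast
  ring

theorem centralBinom_le_four_pow_div_sqrt_mul_exp {n : ℕ} (hn : n ≠ 0) :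
    (centralBinom n : ℝ) ≤ 4 ^ n / √(π * n) * exp (1 / (24 * n)) := by
  have hupper := stirlingSeq_le_sqrt_pi_mul_exp (n := 2 * n) (by omega)
  have hlower := sqrt_pi_le_stirlingSeq hn
  rw [show (12 * ((2 * n : ℕ) : ℝ)) = 24 * n by push_cast; ring] at hupper
  calc (centralBinom n : ℝ) = stirlingSeq (2 * n) / stirlingSeq n ^ 2 * (4 ^ n / √n) :=
        centralBinom_eq_stirlingSeq hn
    _ ≤ √π * exp (1 / (24 * n)) / √π ^ 2 * (4 ^ n / √n) := by gcongr
    _ = 4 ^ n / √(π * n) * exp (1 / (24 * n)) := by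
        rw [sqrt_mul pi_pos.le]
        field_simp

end Nat

theorem stmt0 (n : ℕ) (hn : 0 < n) :
    ((2 * n).choose n : ℝ) ≤ 4 ^ n / Real.sqrt (Real.pi * n) * Real.exp (23 / (36 * n)) := by
  have hn' : (0 : ℝ) < n := by exact_mod_cast hn
  calc ((2 * n).choose n : ℝ) ≤ 4 ^ n / √(π * n) * exp (1 / (24 * n)) :=
        Nat.centralBinom_le_four_pow_div_sqrt_mul_exp hn.ne'
    _ ≤ 4 ^ n / √(π * n) * exp (23 / (36 * n)) := by
        gcongr _ * exp ?_
        rw [div_le_div_iff₀ (by positivity) (by positivity)]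
        linarith
end

section
/- For all positive integers n and all integers k with |k| ≤ n, one has C(2n, n+k) ≤ (4^n / √(π n)) · exp(-k²/n + 23/(36n)). -/
/-! Put `m = n + 1/2`. Passing from `C(2n, n+j)` to `C(2n, n+j+1)` multiplies by
`(n-j)/(n+j+1) = (1-t)/(1+t)` with `t = (j+1/2)/m`, and `log((1+t)/(1-t)) = 2 artanh t` is at least
`2t + 2t³/3`. These increments telescope to `C(2n, n+j) ≤ C(2n, n) e^{-E(j)}` with
`E(j) = j²/m + j²(2j²-1)/(12m³)`. The central coefficient is at most `4ⁿ/√(πn)` because the Stirling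
sequence `n!/(√(2n)(n/e)ⁿ)` decreases to `√π`, so `√π · s(2n) ≤ s(n)²`. Finally
`E(j) ≥ j²/n - 23/(36n)` is an elementary polynomial inequality. -/

open Real

namespace Stirling

theorem stirlingSeq_two_mul_mul_four_pow (n : ℕ) :
    stirlingSeq (2 * n) * 4 ^ n = n.centralBinom * √n * stirlingSeq n ^ 2 := by
  have hfac : ((2 * n).factorial : ℝ) = n.centralBinom * n.factorial * n.factorial := by
    rw [Nat.centralBinom_eq_two_mul_choose, two_mul]
    exact_mod_cast (Nat.add_choose_mul_factorial_mul_factorial n n).symm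
  unfold stirlingSeq
  rw [hfac]
  rcases Nat.eq_zero_or_pos n with rfl | hn
  · simp
  push_cast
  rw [show (2 * (2 * n : ℝ)) = 2 ^ 2 * n by ring, sqrt_mul (by positivity), sqrt_sq (by norm_num),
    sqrt_mul (by norm_num), show (2 * n / exp 1) = 2 * (n / exp 1) by ring, mul_pow, pow_mul,
    pow_mul]
  field_simp
  rw [sq_sqrt zero_le_two]
  ring

theorem sqrt_pi_mul_centralBinom_le_four_pow (n : ℕ) : √(π * n) * n.centralBinom ≤ 4 ^ n := by
  rcases eq_or_ne n 0 with rfl | hn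
  · simp
  obtain ⟨m, rfl⟩ := Nat.exists_eq_add_one_of_ne_zero hn
  have hpos : 0 < stirlingSeq (m + 1) := stirlingSeq'_pos m
  have hmono : stirlingSeq (2 * (m + 1)) ≤ stirlingSeq (m + 1) :=
    stirlingSeq'_antitone (show m ≤ 2 * m + 1 by omega)
  have key : √π * stirlingSeq (2 * (m + 1)) ≤ stirlingSeq (m + 1) * stirlingSeq (m + 1) :=
    mul_le_mul (sqrt_pi_le_stirlingSeq hn) hmono (stirlingSeq'_pos (2 * m + 1)).le hpos.le
  have := mul_le_mul_of_nonneg_right key (by positivity : (0 : ℝ) ≤ 4 ^ (m + 1))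
  rw [mul_assoc, stirlingSeq_two_mul_mul_four_pow] at this
  refine le_of_mul_le_mul_right ?_ (pow_pos hpos 2)
  rw [sqrt_mul pi_pos.le]
  linarith

end Stirling

theorem two_mul_add_two_mul_pow_three_div_three_le_log_sub_log {t : ℝ} (h0 : 0 ≤ t) (h1 : t < 1) :
    2 * t + 2 * t ^ 3 / 3 ≤ log (1 + t) - log (1 - t) := by
  have hsum := hasSum_log_sub_log_of_abs_lt_one (abs_lt.2 ⟨by linarith, h1⟩)
  have := sum_le_hasSum (Finset.range 2) (fun i _ => by positivity) hsum
  norm_num [Finset.sum_range_succ] at this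
  linarith

theorem one_sub_mul_exp_le_one_add {t : ℝ} (h0 : 0 ≤ t) (h1 : t < 1) :
    (1 - t) * exp (2 * t + 2 * t ^ 3 / 3) ≤ 1 + t := by
  have hexp := exp_le_exp.2 (two_mul_add_two_mul_pow_three_div_three_le_log_sub_log h0 h1)
  rw [exp_sub, exp_log (by linarith), exp_log (by linarith), le_div_iff₀ (by linarith)] at hexp
  linarith

noncomputable def binomTailExponent (n j : ℝ) : ℝ :=
  j ^ 2 / (n + 1 / 2) + j ^ 2 * (2 * j ^ 2 - 1) / (12 * (n + 1 / 2) ^ 3)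

theorem binomTailExponent_add_one (n j : ℝ) :
    binomTailExponent n (j + 1) = binomTailExponent n j +
      (2 * ((2 * j + 1) / (2 * n + 1)) + 2 * ((2 * j + 1) / (2 * n + 1)) ^ 3 / 3) := by
  unfold binomTailExponent
  field_simp
  ring

theorem choose_two_mul_add_succ_mul_exp_le {n j : ℕ} (hj : j < n) :
    ((2 * n).choose (n + j + 1) : ℝ) *
        exp (2 * ((2 * j + 1) / (2 * n + 1)) + 2 * ((2 * j + 1) / (2 * n + 1)) ^ 3 / 3) ≤
      (2 * n).choose (n + j) := by
  set t : ℝ := (2 * j + 1) / (2 * n + 1) with ht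
  have hn : (0 : ℝ) < 2 * n + 1 := by positivity
  have hjn : (j : ℝ) + 1 ≤ n := by exact_mod_cast hj
  have hstep : ((2 * n).choose (n + j + 1) : ℝ) * (n + j + 1) =
      (2 * n).choose (n + j) * (n - j) := by
    have h := Nat.choose_succ_right_eq (2 * n) (n + j)
    rw [show 2 * n - (n + j) = n - j by omega] at h
    rw [← Nat.cast_sub hj.le]
    exact_mod_cast h
  have ht0 : 0 ≤ t := by positivity
  have ht1 : t < 1 := by rw [ht, div_lt_one hn]; linarith
  -- `n - j` and `n + j + 1` are `(2n + 1) / 2` times `1 - t` and `1 + t`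
  have hkey : ((n : ℝ) - j) * exp (2 * t + 2 * t ^ 3 / 3) ≤ n + j + 1 := by
    have h := mul_le_mul_of_nonneg_left (one_sub_mul_exp_le_one_add ht0 ht1)
      (by positivity : (0 : ℝ) ≤ (2 * n + 1) / 2)
    have hsub : (2 * n + 1) / 2 * (1 - t) = (n : ℝ) - j := by rw [ht]; field_simp; ring
    have hadd : (2 * n + 1) / 2 * (1 + t) = (n : ℝ) + j + 1 := by rw [ht]; field_simp; ring
    rwa [← mul_assoc, hsub, hadd] at h
  refine le_of_mul_le_mul_right ?_ (by positivity : (0 : ℝ) < n + j + 1)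
  calc ((2 * n).choose (n + j + 1) : ℝ) * exp (2 * t + 2 * t ^ 3 / 3) * (n + j + 1)
      = (2 * n).choose (n + j) * ((n - j) * exp (2 * t + 2 * t ^ 3 / 3)) := by
        rw [mul_right_comm, hstep, mul_assoc]
    _ ≤ (2 * n).choose (n + j) * (n + j + 1) := by gcongr

theorem choose_two_mul_add_mul_exp_le_centralBinom {n j : ℕ} (hj : j ≤ n) :
    ((2 * n).choose (n + j) : ℝ) * exp (binomTailExponent n j) ≤ n.centralBinom := by
  induction j with
  | zero => simp [binomTailExponent, Nat.centralBinom_eq_two_mul_choose]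
  | succ j ih =>
    calc ((2 * n).choose (n + (j + 1)) : ℝ) * exp (binomTailExponent n ↑(j + 1))
        = (2 * n).choose (n + j + 1) *
            exp (2 * ((2 * j + 1) / (2 * n + 1)) + 2 * ((2 * j + 1) / (2 * n + 1)) ^ 3 / 3) *
            exp (binomTailExponent n j) := by
          rw [Nat.cast_succ, binomTailExponent_add_one, exp_add, ← add_assoc]; ring
      _ ≤ (2 * n).choose (n + j) * exp (binomTailExponent n j) := by
          gcongr; exact choose_two_mul_add_succ_mul_exp_le hj
      _ ≤ n.centralBinom := ih (by omega)

theorem sq_div_sub_le_binomTailExponent {n j : ℕ} (hn : n ≠ 0) (hj : j ≤ n) :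
    (j : ℝ) ^ 2 / n - 23 / (36 * n) ≤ binomTailExponent n j := by
  have hN : (1 : ℝ) ≤ n := by exact_mod_cast Nat.one_le_iff_ne_zero.2 hn
  set N : ℝ := (n : ℝ)
  set x : ℝ := (j : ℝ) ^ 2 with hxdef
  set m : ℝ := N + 1 / 2 with hmdef
  -- a quadratic in `x = j²`, with negative discriminant once `n ≥ 2`
  have hquad : 0 ≤ 48 * N ^ 2 * x ^ 2 - 24 * N * (6 * m ^ 2 + N) * x + 184 * N * m ^ 3 := by
    rcases eq_or_ne n 1 with rfl | h1
    · have hx : x ≤ 1 := by simp only [x]; norm_cast; nlinarith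
      norm_num [m, N]
      nlinarith [sq_nonneg x]
    · have h2 : (2 : ℝ) ≤ N := by simp only [N]; norm_cast; omega
      have hdisc : 3 * (6 * m ^ 2 + N) ^ 2 ≤ 184 * N * m ^ 3 := by
        simp only [m]
        nlinarith [sq_nonneg N,
          mul_nonneg (sub_nonneg.2 h2) (pow_nonneg (by linarith : (0 : ℝ) ≤ N) 3)]
      nlinarith [sq_nonneg (4 * N * x - (6 * m ^ 2 + N))]
  have heq : binomTailExponent N j - (x / N - 23 / (36 * N)) =
      (48 * N ^ 2 * x ^ 2 - 24 * N * (6 * m ^ 2 + N) * x + 184 * N * m ^ 3) /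
        (288 * N ^ 2 * m ^ 3) := by
    rw [hmdef, hxdef]
    unfold binomTailExponent
    field_simp
    ring
  have := div_nonneg hquad (by positivity : (0 : ℝ) ≤ 288 * N ^ 2 * m ^ 3)
  linarith

theorem toNat_choose_toNat_eq_choose_add_natAbs {n : ℕ} {k : ℤ} (hk : |k| ≤ (n : ℤ)) :
    (2 * n : ℤ).toNat.choose ((n : ℤ) + k).toNat = (2 * n).choose (n + k.natAbs) := by
  have hk' := abs_le.1 hk
  have h2n : (2 * n : ℤ).toNat = 2 * n := by omega
  rcases Int.natAbs_eq k with hkpos | hkneg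
  · rw [h2n, show ((n : ℤ) + k).toNat = n + k.natAbs by omega]
  · rw [h2n, show ((n : ℤ) + k).toNat = 2 * n - (n + k.natAbs) by omega]
    exact Nat.choose_symm (by omega)

theorem stmt1 (n : ℕ) (hn : 0 < n) (k : ℤ) (hk : |k| ≤ (n : ℤ)) :
    (((2 * n : ℤ).toNat.choose ((n : ℤ) + k).toNat : ℝ)) ≤
      4 ^ n / Real.sqrt (Real.pi * n) * Real.exp (-(k : ℝ) ^ 2 / n + 23 / (36 * n)) := by
  have hj : k.natAbs ≤ n := by have := abs_le.1 hk; omega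
  have hk2 : (k : ℝ) ^ 2 = (k.natAbs : ℝ) ^ 2 := by rw [Nat.cast_natAbs, Int.cast_abs, sq_abs]
  have hcentral : (n.centralBinom : ℝ) ≤ 4 ^ n / √(π * n) := by
    rw [le_div_iff₀ (by positivity), mul_comm]
    exact Stirling.sqrt_pi_mul_centralBinom_le_four_pow n
  rw [toNat_choose_toNat_eq_choose_add_natAbs hk, hk2]
  calc ((2 * n).choose (n + k.natAbs) : ℝ)
      ≤ n.centralBinom * exp (-binomTailExponent n k.natAbs) := by
        rw [exp_neg, ← div_eq_mul_inv, le_div_iff₀ (exp_pos _)]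
        exact choose_two_mul_add_mul_exp_le_centralBinom hj
    _ ≤ 4 ^ n / √(π * n) * exp (-(k.natAbs : ℝ) ^ 2 / n + 23 / (36 * n)) := by
        gcongr
        linarith [sq_div_sub_le_binomTailExponent hn.ne' hj, neg_div (n : ℝ) ((k.natAbs : ℝ) ^ 2)]
end

section
/- For all integers n ≥ 0 and 0 ≤ k ≤ n with n ≥ 1, C(n, k) ≤ (2^n / √(π n / 2)) · exp(-(2/n)·(k - n/2)² + 23/(18n)). -/
/-!
By symmetry we may assume `2 k ≤ n`. For `k ≥ 2`, Stirling's formula with Robbins' error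
bounds, `√π ≤ stirlingSeq n ≤ √π * exp (1 / (12 n))`, bounds `log (n.choose k)`; writing
`k = n (1 - x) / 2`, the claim reduces to
`n x² - 43 / (18 n) ≤ (n (1 + x) + 1) log (1 + x) + (n (1 - x) + 1) log (1 - x)`
whenever `n (1 - x) ≥ 4`. Truncating the power series of `log` turns this into the
nonnegativity of a quadratic in `n` whose coefficients are polynomials in `x`: for `x ≤ 3/5` its
discriminant is negative, and for `x ≥ 3/5` it is nonnegative and increasing at the smallest
admissible value `n = 4 / (1 - x)`. The cases `k = 0` and `k = 1` follow from
`log n ≤ n / t + log t - 1` with `t = 4, 8`.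
-/

open Real Finset Filter Stirling
open scoped Nat

section Quadratic

variable {a b c N : ℝ}

lemma quadratic_nonneg_of_sq_le (ha : 0 ≤ a) (hc : 0 ≤ c) (hb : b ^ 2 ≤ 4 * a * c) :
    0 ≤ a * N ^ 2 - b * N + c := by
  rcases ha.eq_or_lt with rfl | ha
  · obtain rfl : b = 0 := by nlinarith
    simpa using hc
  · nlinarith [sq_nonneg (2 * a * N - b)]

lemma quadratic_nonneg_of_ge {N₀ : ℝ} (ha : 0 ≤ a) (hb : b ≤ 2 * a * N₀)
    (h₀ : 0 ≤ a * N₀ ^ 2 - b * N₀ + c) (hN : N₀ ≤ N) : 0 ≤ a * N ^ 2 - b * N + c := by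
  nlinarith [mul_nonneg ha (sq_nonneg (N - N₀)), mul_nonneg (sub_nonneg.2 hb) (sub_nonneg.2 hN)]

end Quadratic

lemma sum_le_mul_log_sub_log_add_log_one_sub_sq {x : ℝ} (hx : |x| < 1) :
    x ^ 2 + x ^ 4 / 6 + x ^ 6 / 15 + x ^ 8 / 28 ≤
      x * (log (1 + x) - log (1 - x)) + log (1 - x ^ 2) := by
  have hx2 : |x ^ 2| < 1 := by rw [abs_pow, sq_lt_one_iff_abs_lt_one]; simpa using hx
  have h := ((hasSum_log_sub_log_of_abs_lt_one hx).mul_left x).add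
    (hasSum_pow_div_log_of_abs_lt_one hx2).neg
  rw [neg_neg] at h
  have h' : HasSum (fun k : ℕ => (x ^ 2) ^ (k + 1) / ((2 * k + 1) * (k + 1)))
      (x * (log (1 + x) - log (1 - x)) + log (1 - x ^ 2)) := by
    refine h.congr_fun fun k => ?_
    field_simp
    ring
  refine le_of_eq_of_le ?_ (sum_le_hasSum (range 4) (fun k _ => by positivity) h')
  simp only [sum_range_succ, sum_range_zero]
  norm_num
  ring

lemma neg_log_one_sub_le {y : ℝ} (hy₀ : 0 ≤ y) (hy₁ : y < 1) :
    -log (1 - y) ≤ y + y ^ 2 / 2 + y ^ 3 / 3 + y ^ 4 / (1 - y) := by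
  have h := abs_log_sub_add_sum_range_le (show |y| < 1 by rwa [abs_of_nonneg hy₀]) 3
  rw [abs_of_nonneg hy₀] at h
  simp only [sum_range_succ, sum_range_zero] at h
  norm_num at h
  linarith [neg_abs_le ((y + y ^ 2 / 2 + y ^ 3 / 3) + log (1 - y)), h]

lemma taylor_quadratic_nonneg_of_le {x N : ℝ} (hx₀ : 0 ≤ x) (hx : x ≤ 3 / 5)
    (hN : 0 ≤ N) :
    0 ≤ (x ^ 4 / 6 + x ^ 6 / 15 + x ^ 8 / 28) * N ^ 2
      - (x ^ 2 + x ^ 4 / 2 + x ^ 6 / 3 + x ^ 8 / (1 - x ^ 2)) * N + 43 / 18 := by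
  have hq : x ^ 8 / (1 - x ^ 2) ≤ 25 / 16 * x ^ 8 := by
    rw [div_le_iff₀ (by nlinarith)]
    nlinarith [mul_nonneg (pow_nonneg hx₀ 8) (by nlinarith : (0 : ℝ) ≤ 9 - 25 * x ^ 2)]
  have hP : (1 + x ^ 2 / 2 + x ^ 4 / 3 + 25 * x ^ 6 / 16) ^ 2 ≤
      86 / 9 * (1 / 6 + x ^ 2 / 15 + x ^ 4 / 28) := by
    have hy : x ^ 2 ≤ 9 / 25 := by nlinarith
    have hy₀ := sq_nonneg x
    nlinarith [mul_nonneg hy₀ (sub_nonneg.2 hy), pow_nonneg hy₀ 3, pow_nonneg hy₀ 4,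
      mul_nonneg (pow_nonneg hy₀ 2) (sub_nonneg.2 hy),
      mul_nonneg (pow_nonneg hy₀ 3) (sub_nonneg.2 hy)]
  have := quadratic_nonneg_of_sq_le (N := N) (a := x ^ 4 / 6 + x ^ 6 / 15 + x ^ 8 / 28)
    (b := x ^ 2 + x ^ 4 / 2 + x ^ 6 / 3 + 25 / 16 * x ^ 8) (by positivity)
    (by norm_num : (0 : ℝ) ≤ 43 / 18)
    (by linarith [mul_le_mul_of_nonneg_left hP (pow_nonneg (sq_nonneg x) 2)])
  nlinarith

lemma taylor_quadratic_nonneg_of_ge {x N : ℝ} (hx : 3 / 5 ≤ x) (hx₁ : x < 1)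
    (hN : 4 ≤ N * (1 - x)) :
    0 ≤ (x ^ 4 / 6 + x ^ 6 / 15 + x ^ 8 / 28) * N ^ 2
      - (x ^ 2 + x ^ 4 / 2 + x ^ 6 / 3 + x ^ 8 / (1 - x ^ 2)) * N + 43 / 18 := by
  have hs : 0 < 1 - x := by linarith
  have hq : x ^ 8 / (1 - x ^ 2) * (1 - x) ≤ 5 / 8 * x ^ 8 := by
    rw [show 1 - x ^ 2 = (1 - x) * (1 + x) by ring, div_mul_eq_mul_div,
      div_le_iff₀ (by positivity)]
    nlinarith [mul_nonneg (mul_nonneg (pow_nonneg (by linarith : 0 ≤ x) 8) hs.le)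
      (sub_nonneg.2 hx)]
  -- the two polynomial conditions have nonnegative coefficients in the Bernstein basis of
  -- degree 8 on `[3/5, 1]`
  have hB := fun i : ℕ => mul_nonneg (pow_nonneg (sub_nonneg.2 hx) i) (pow_nonneg hs.le (8 - i))
  have := quadratic_nonneg_of_ge (N₀ := 4) (c := 43 / 18 * (1 - x) ^ 2)
    (a := x ^ 4 / 6 + x ^ 6 / 15 + x ^ 8 / 28) (by positivity)
    (b := (x ^ 2 + x ^ 4 / 2 + x ^ 6 / 3) * (1 - x) + 5 / 8 * x ^ 8)
    (by linarith [hB 0, hB 1, hB 2, hB 3, hB 4, hB 5, hB 6, hB 7, hB 8])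
    (by linarith [hB 0, hB 1, hB 2, hB 3, hB 4, hB 5, hB 6, hB 7, hB 8]) hN
  refine nonneg_of_mul_nonneg_right (a := (1 - x) ^ 2) ?_ (by positivity)
  nlinarith

lemma taylor_le_mul_taylor_add_div {x N : ℝ} (hx₀ : 0 ≤ x) (hx₁ : x < 1)
    (hN : 4 ≤ N * (1 - x)) :
    x ^ 2 + x ^ 4 / 2 + x ^ 6 / 3 + x ^ 8 / (1 - x ^ 2) ≤
      N * (x ^ 4 / 6 + x ^ 6 / 15 + x ^ 8 / 28) + 43 / 18 / N := by
  have hN₀ : 0 < N := pos_of_mul_pos_left (by linarith) (by linarith : 0 ≤ 1 - x)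
  have h := (le_or_gt x (3 / 5)).elim (taylor_quadratic_nonneg_of_le hx₀ · hN₀.le)
    fun hx => taylor_quadratic_nonneg_of_ge hx.le hx₁ hN
  have e : N * (x ^ 4 / 6 + x ^ 6 / 15 + x ^ 8 / 28) + 43 / 18 / N
      - (x ^ 2 + x ^ 4 / 2 + x ^ 6 / 3 + x ^ 8 / (1 - x ^ 2)) =
      ((x ^ 4 / 6 + x ^ 6 / 15 + x ^ 8 / 28) * N ^ 2
        - (x ^ 2 + x ^ 4 / 2 + x ^ 6 / 3 + x ^ 8 / (1 - x ^ 2)) * N + 43 / 18) / N := by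
    field_simp
    ring
  rw [← sub_nonneg, e]
  positivity

lemma sq_sub_le_mul_log_one_add_add_mul_log_one_sub {x N : ℝ} (hx₀ : 0 ≤ x) (hx₁ : x < 1)
    (hN : 4 ≤ N * (1 - x)) :
    N * x ^ 2 - 43 / 18 / N ≤
      (N * (1 + x) + 1) * log (1 + x) + (N * (1 - x) + 1) * log (1 - x) := by
  have hN₀ : 0 ≤ N := nonneg_of_mul_nonneg_left (by linarith) (by linarith : 0 < 1 - x)
  have hlog : log (1 - x ^ 2) = log (1 + x) + log (1 - x) := by
    rw [← log_mul (by linarith) (by linarith)]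
    ring_nf
  have hA := sum_le_mul_log_sub_log_add_log_one_sub_sq (abs_lt.2 ⟨by linarith, hx₁⟩)
  have hB : -log (1 - x ^ 2) ≤ x ^ 2 + x ^ 4 / 2 + x ^ 6 / 3 + x ^ 8 / (1 - x ^ 2) := by
    simpa only [← pow_mul] using neg_log_one_sub_le (sq_nonneg x) (by nlinarith : x ^ 2 < 1)
  rw [hlog] at hA hB
  linarith [mul_le_mul_of_nonneg_left hA hN₀, taylor_le_mul_taylor_add_div hx₀ hx₁ hN]

lemma log_stirlingSeq_le {n : ℕ} (hn : n ≠ 0) :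
    log (stirlingSeq n) ≤ log π / 2 + 1 / (12 * n) := by
  have hmono : Monotone fun m : ℕ => log (stirlingSeq (m + 1)) - 1 / (12 * ((m : ℝ) + 1)) := by
    refine monotone_nat_of_le_succ fun m => ?_
    have h := log_stirlingSeq_sdiff_le (m + 1)
    have e : (1 : ℝ) / (12 * (m + 1 : ℕ) * ((m + 1 : ℕ) + 1)) =
        1 / (12 * ((m : ℝ) + 1)) - 1 / (12 * ((m + 1 : ℕ) + 1)) := by
      push_cast
      field_simp
      ring
    linarith
  have hlim : Tendsto (fun m : ℕ => log (stirlingSeq (m + 1)) - 1 / (12 * ((m : ℝ) + 1)))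
      atTop (nhds (log √π - 0)) := by
    refine ((continuousAt_log (by positivity)).tendsto.comp
      (tendsto_stirlingSeq_sqrt_pi.comp (tendsto_add_atTop_nat 1))).sub ?_
    simpa [div_eq_mul_inv, mul_comm] using
      (tendsto_one_div_add_atTop_nhds_zero_nat (𝕜 := ℝ)).div_const 12
  obtain ⟨m, rfl⟩ := Nat.exists_eq_succ_of_ne_zero hn
  have := hmono.ge_of_tendsto hlim m
  rw [log_sqrt pi_pos.le] at this
  push_cast at this ⊢
  linarith

lemma log_factorial_le_stirling {n : ℕ} (hn : n ≠ 0) :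
    log n ! ≤ n * log n - n + log n / 2 + log (2 * π) / 2 + 1 / (12 * n) := by
  have h := log_stirlingSeq_formula n
  have hn' : (0 : ℝ) < n := by positivity
  rw [log_div hn'.ne' (exp_pos 1).ne', log_exp, log_mul two_ne_zero hn'.ne'] at h
  rw [log_mul two_ne_zero pi_pos.ne']
  linarith [log_stirlingSeq_le hn]

lemma log_le_div_add_log_sub_one {x t : ℝ} (hx : 0 < x) (ht : 0 < t) :
    log x ≤ x / t + log t - 1 := by
  have h := log_le_sub_one_of_pos (div_pos hx ht)
  rw [log_div hx.ne' ht.ne'] at h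
  linarith

lemma log_pi_lt : log π < 1.1487 := by
  have h := log_le_div_add_log_sub_one pi_pos (by norm_num : (0 : ℝ) < 3)
  linarith [pi_lt_d2, log_three_lt_d9]

noncomputable def logAgievichBound (n k : ℝ) : ℝ :=
  n * log 2 - log (π * n / 2) / 2 + (-(2 / n) * (k - n / 2) ^ 2 + 23 / (18 * n))

lemma logAgievichBound_eq {n k : ℝ} (hn : 0 < n) :
    logAgievichBound n k = n * log 2 - (log π + log n - log 2) / 2 - (2 / n) * (k - n / 2) ^ 2
      + 23 / (18 * n) := by
  rw [logAgievichBound, log_div (by positivity) two_ne_zero, log_mul pi_pos.ne' hn.ne']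
  ring

lemma logAgievichBound_zero_nonneg {n : ℝ} (hn : 1 ≤ n) : 0 ≤ logAgievichBound n 0 := by
  have hn₀ : 0 < n := by linarith
  have hlog := log_le_div_add_log_sub_one hn₀ (by norm_num : (0 : ℝ) < 8)
  rw [show (8 : ℝ) = 2 ^ 3 by norm_num, log_pow] at hlog
  rw [logAgievichBound_eq hn₀, show (2 / n) * (0 - n / 2) ^ 2 = n / 2 by field_simp; ring]
  have h23 : n * (23 / (18 * n)) = 23 / 18 := by field_simp
  refine nonneg_of_mul_nonneg_right ?_ hn₀
  nlinarith [log_pi_lt, log_two_gt_d9, sq_nonneg (n - 3),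
    mul_le_mul_of_nonneg_left hlog hn₀.le,
    mul_nonneg (sub_nonneg.2 hn) (sub_nonneg.2 log_two_gt_d9.le)]

lemma log_le_logAgievichBound_one {n : ℝ} (hn : 2 ≤ n) : log n ≤ logAgievichBound n 1 := by
  have hn₀ : 0 < n := by linarith
  rw [logAgievichBound_eq hn₀,
    show (2 / n) * (1 - n / 2) ^ 2 = 2 / n - 2 + n / 2 by field_simp; ring, ← sub_nonneg]
  have h23 : n * (23 / (18 * n) - 2 / n) = -13 / 18 := by field_simp; ring
  refine nonneg_of_mul_nonneg_right ?_ hn₀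
  rcases le_or_gt n 5 with h5 | h5
  · have hlog := log_le_div_add_log_sub_one hn₀ (by norm_num : (0 : ℝ) < 4)
    rw [show (4 : ℝ) = 2 ^ 2 by norm_num, log_pow] at hlog
    nlinarith [log_pi_lt, log_two_gt_d9, log_two_lt_d9,
      mul_le_mul_of_nonneg_left hlog hn₀.le, mul_nonneg (sub_nonneg.2 hn) (sub_nonneg.2 h5)]
  · have hlog := log_le_div_add_log_sub_one hn₀ (by norm_num : (0 : ℝ) < 8)
    rw [show (8 : ℝ) = 2 ^ 3 by norm_num, log_pow] at hlog
    nlinarith [log_pi_lt, log_two_gt_d9,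
      mul_le_mul_of_nonneg_left hlog hn₀.le,
      mul_nonneg (sub_nonneg.2 h5.le) (sub_nonneg.2 log_two_gt_d9.le)]

lemma sq_sub_le_mul_log_add_mul_log {K M : ℝ} (hK : 2 ≤ K) (hKM : K ≤ M) :
    (M - K) ^ 2 / (K + M) - 43 / 18 / (K + M) ≤
      (2 * M + 1) * (log 2 + log M - log (K + M)) +
        (2 * K + 1) * (log 2 + log K - log (K + M)) := by
  have hK₀ : 0 < K := by linarith
  have hM₀ : 0 < M := by linarith
  have hN : 0 < K + M := by linarith
  have hx₀ : 0 ≤ (M - K) / (K + M) := div_nonneg (by linarith) hN.le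
  have hx₁ : (M - K) / (K + M) < 1 := by rw [div_lt_one hN]; linarith
  have hadd : 1 + (M - K) / (K + M) = 2 * M / (K + M) := by field_simp; ring
  have hsub : 1 - (M - K) / (K + M) = 2 * K / (K + M) := by field_simp; ring
  have h := sq_sub_le_mul_log_one_add_add_mul_log_one_sub (N := K + M) hx₀ hx₁
    (by rw [hsub]; field_simp; linarith)
  rwa [hadd, hsub, log_div (by positivity) hN.ne', log_div (by positivity) hN.ne',
    log_mul two_ne_zero hM₀.ne', log_mul two_ne_zero hK₀.ne',
    show (K + M) * (2 * M / (K + M)) = 2 * M by field_simp,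
    show (K + M) * (2 * K / (K + M)) = 2 * K by field_simp,
    show (K + M) * ((M - K) / (K + M)) ^ 2 = (M - K) ^ 2 / (K + M) by field_simp] at h

lemma log_choose_le_logAgievichBound {n k : ℕ} (hk : 2 ≤ k) (hkn : 2 * k ≤ n) :
    log (n.choose k) ≤ logAgievichBound n k := by
  obtain ⟨m, rfl⟩ : ∃ m, n = k + m := ⟨n - k, by omega⟩
  have hN : (0 : ℝ) < k + m := by positivity
  have hchoose : log ((k + m).choose k) = log (k + m)! - log k ! - log m ! := by
    rw [Nat.cast_choose ℝ (Nat.le_add_right k m), Nat.add_sub_cancel_left,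
      log_div (by positivity) (by positivity), log_mul (by positivity) (by positivity)]
    ring
  have hn := log_factorial_le_stirling (n := k + m) (by omega)
  have hk' := le_log_factorial_stirling (n := k) (by omega)
  have hm' := le_log_factorial_stirling (n := m) (by omega)
  have h := sq_sub_le_mul_log_add_mul_log (K := k) (M := m) (by exact_mod_cast hk)
    (by exact_mod_cast (by omega : k ≤ m))
  rw [hchoose, logAgievichBound_eq (by exact_mod_cast hN)]
  push_cast at hn ⊢
  rw [log_mul two_ne_zero pi_pos.ne'] at hn hk' hm'
  -- `43 / 18 = 2 * (23 / 18) - 1 / 6`: the Stirling error `1 / (12 n)` is paid out of `23 / (18 n)`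
  rw [show 2 / ((k : ℝ) + m) * (k - (k + m) / 2) ^ 2 = (m - k) ^ 2 / (k + m) / 2 by
    field_simp; ring]
  rw [show 43 / 18 / ((k : ℝ) + m) = 2 * (23 / (18 * (k + m))) - 2 * (1 / (12 * (k + m))) by
    field_simp; ring] at h
  linarith

lemma le_of_log_le_logAgievichBound {n : ℕ} (hn : n ≠ 0) {c k : ℝ} (hc : 0 < c)
    (h : log c ≤ logAgievichBound n k) :
    c ≤ 2 ^ n / √(π * n / 2) * exp (-(2 / n) * (k - n / 2) ^ 2 + 23 / (18 * n)) := by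
  have hs : 0 < √(π * n / 2) := sqrt_pos.2 (by positivity)
  rw [← log_le_log_iff hc (by positivity), log_mul (by positivity) (exp_pos _).ne', log_exp,
    log_div (by positivity) hs.ne', log_pow, log_sqrt (by positivity)]
  exact h

theorem stmt2 (n k : ℕ) (hn : 1 ≤ n) (hk : k ≤ n) :
    (n.choose k : ℝ) ≤ 2 ^ n / Real.sqrt (Real.pi * n / 2) *
      Real.exp (-(2 / n) * ((k : ℝ) - n / 2) ^ 2 + 23 / (18 * n)) := by
  wlog h2k : 2 * k ≤ n generalizing k
  · have h := this (n - k) (Nat.sub_le n k) (by omega)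
    rwa [Nat.choose_symm hk, Nat.cast_sub hk,
      show ((n : ℝ) - k - n / 2) ^ 2 = (k - n / 2) ^ 2 by ring] at h
  refine le_of_log_le_logAgievichBound (by omega) (by exact_mod_cast Nat.choose_pos hk) ?_
  rcases (by omega : k = 0 ∨ k = 1 ∨ 2 ≤ k) with rfl | rfl | hk₂
  · simpa using logAgievichBound_zero_nonneg (n := n) (by exact_mod_cast hn)
  · simpa using log_le_logAgievichBound_one (n := n) (by exact_mod_cast (by omega : 2 ≤ n))
  · exact log_choose_le_logAgievichBound hk₂ h2k
end

section
/- For every positive integer n, (4^n / √(π n)) · exp(-1/(8n)) ≤ C(2n, n). -/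
/-!
Write `s n = n! / (√(2n) (n/e)^n)` for the Stirling sequence, so that
`C(2n, n) √n s(n)^2 = 4^n s(2n)`. Robbins' bound
`log s(m) - log s(m+1) ≤ 1/(12m) - 1/(12(m+1))` telescopes, together with `s(m) → √π`, to
`log s(n) ≤ log √π + 1/(12n)` and `log s(n) - log s(2n) ≤ 1/(24n)`. Adding the two gives
`s(n)^2 e^{-1/(8n)} ≤ √π s(2n)`, which is the claim.
-/

open Real Filter Topology Stirling
open scoped Nat

namespace Stirling

theorem log_stirlingSeq_sub_log_stirlingSeq_add_le {n : ℕ} (hn : n ≠ 0) (k : ℕ) :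
    log (stirlingSeq n) - log (stirlingSeq (n + k)) ≤ 1 / (12 * n) - 1 / (12 * (n + k)) := by
  induction k with
  | zero => simp
  | succ k ih =>
    have hnk : (0 : ℝ) < n + k := by positivity
    have robbins := log_stirlingSeq_sdiff_le (n + k)
    have telescope : (1 : ℝ) / (12 * (n + k) * (n + k + 1)) =
        1 / (12 * (n + k)) - 1 / (12 * (n + (k + 1))) := by
      field_simp
      ring
    rw [← add_assoc]
    push_cast at robbins ⊢
    linarith

theorem log_stirlingSeq_le {n : ℕ} (hn : n ≠ 0) :
    log (stirlingSeq n) ≤ log √π + 1 / (12 * n) := by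
  have hlim : Tendsto (fun k ↦ log (stirlingSeq (n + k))) atTop (𝓝 (log √π)) :=
    (continuousAt_log (by positivity)).tendsto.comp
      (tendsto_stirlingSeq_sqrt_pi.comp (tendsto_atTop_mono (Nat.le_add_left · n) tendsto_id))
  have hbound (k : ℕ) : log (stirlingSeq n) - 1 / (12 * n) ≤ log (stirlingSeq (n + k)) := by
    have := log_stirlingSeq_sub_log_stirlingSeq_add_le hn k
    have : (0 : ℝ) ≤ 1 / (12 * (n + k)) := by positivity
    linarith
  linarith [ge_of_tendsto' hlim hbound]

theorem sq_stirlingSeq_mul_exp_le {n : ℕ} (hn : n ≠ 0) :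
    stirlingSeq n ^ 2 * exp (-1 / (8 * n)) ≤ √π * stirlingSeq (2 * n) := by
  have hpi : 0 < √π := sqrt_pos.mpr pi_pos
  have ha := hpi.trans_le (sqrt_pi_le_stirlingSeq hn)
  have hb := hpi.trans_le (sqrt_pi_le_stirlingSeq (mul_ne_zero two_ne_zero hn))
  have hfirst := log_stirlingSeq_le hn
  have hsecond := log_stirlingSeq_sub_log_stirlingSeq_add_le hn n
  rw [← two_mul] at hsecond
  have hsum : (1 : ℝ) / (12 * n) + (1 / (12 * n) - 1 / (12 * (n + n))) = 1 / (8 * n) := by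
    have : (0 : ℝ) < n := by positivity
    field_simp
    ring
  rw [← log_le_log_iff (by positivity) (by positivity), log_mul (by positivity) (by positivity),
    log_mul hpi.ne' hb.ne', log_pow, log_exp, neg_div]
  push_cast at hfirst hsecond ⊢
  linarith

end Stirling

theorem Nat.centralBinom_mul_sq_stirlingSeq {n : ℕ} (hn : n ≠ 0) :
    (n.centralBinom : ℝ) * (stirlingSeq n ^ 2 * √n) = 4 ^ n * stirlingSeq (2 * n) := by
  have hfac : ((2 * n)! : ℝ) = n.centralBinom * n ! * n ! := by
    have := Nat.choose_mul_factorial_mul_factorial (Nat.le_mul_of_pos_left n two_pos)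
    rw [two_mul, Nat.add_sub_cancel] at this
    rw [Nat.centralBinom, two_mul]
    exact_mod_cast this.symm
  have hsqrt : √(2 * (2 * n : ℕ) : ℝ) = 2 * √n := by
    rw [Nat.cast_mul, ← mul_assoc, sqrt_mul (by norm_num)]
    norm_num
  have hn' : (0 : ℝ) < n := by positivity
  unfold stirlingSeq
  rw [hfac, hsqrt, div_pow, mul_pow, sq_sqrt (by positivity)]
  field_simp
  rw [sq_sqrt hn'.le, show (4 : ℝ) ^ n = 2 ^ (2 * n) by rw [pow_mul]; norm_num]
  push_cast
  ring

theorem stmt3 (n : ℕ) (hn : 0 < n) :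
    4 ^ n / Real.sqrt (Real.pi * n) * Real.exp (-1 / (8 * n)) ≤ ((2 * n).choose n : ℝ) := by
  have ha : 0 < stirlingSeq n := (sqrt_pos.mpr pi_pos).trans_le (sqrt_pi_le_stirlingSeq hn.ne')
  rw [← Nat.centralBinom_eq_two_mul_choose]
  refine le_of_mul_le_mul_right ?_ (by positivity : 0 < stirlingSeq n ^ 2 * √n)
  rw [Nat.centralBinom_mul_sq_stirlingSeq hn.ne']
  calc 4 ^ n / √(π * n) * exp (-1 / (8 * n)) * (stirlingSeq n ^ 2 * √n)
      = 4 ^ n * (stirlingSeq n ^ 2 * exp (-1 / (8 * n))) / √π := by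
        rw [sqrt_mul pi_pos.le]
        field_simp
    _ ≤ 4 ^ n * (√π * stirlingSeq (2 * n)) / √π := by
        gcongr 4 ^ n * ?_ / √π
        exact sq_stirlingSeq_mul_exp_le hn.ne'
    _ = 4 ^ n * stirlingSeq (2 * n) := by field_simp
end

section
/- For every positive integer n, C(2n, n) ≤ (4^n / √(π n)) · exp(-1/(8n) + 1/(192 n³)). -/
open Real Filter Finset Stirling Topology

lemma log_one_sub_lb {u : ℝ} (h0 : 0 ≤ u) (h1 : u < 1) :
    u + u^2/2 + u^3/3 + u^4/4 ≤ -Real.log (1 - u) := by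
  have habs : |u| < 1 := by rwa [abs_of_nonneg h0]
  have hs := Real.hasSum_pow_div_log_of_abs_lt_one habs
  have h := sum_le_hasSum (Finset.range 4) (fun i _ => by positivity) hs
  norm_num [Finset.sum_range_succ] at h
  linarith

noncomputable def gseq (n : ℕ) : ℝ :=
  Real.log ((2 * n).choose n) + (1/2) * Real.log (Real.pi * n)
    - n * Real.log 4 + 1 / (8 * n) - 1 / (192 * (n:ℝ) ^ 3)

lemma gseq_mono (n : ℕ) (hn : 1 ≤ n) : gseq n ≤ gseq (n + 1) := by
  have hm : (1:ℝ) ≤ (n:ℝ) := by exact_mod_cast hn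
  set m : ℝ := (n:ℝ) with hmdef
  have hm0 : (0:ℝ) < m := by linarith
  set u : ℝ := (1/(2*m+1))^2 with hudef
  have hu0 : 0 ≤ u := by positivity
  have hu1 : u < 1 := by
    rw [hudef]
    have : (1/(2*m+1)) < 1 := by
      rw [div_lt_one (by linarith)]; linarith
    have h2 : (0:ℝ) ≤ 1/(2*m+1) := by positivity
    nlinarith
  -- choose ratio
  have hCpos : (0:ℝ) < ((2*n).choose n : ℝ) := by
    exact_mod_cast Nat.choose_pos (by omega)
  have hnat := Nat.succ_mul_centralBinom_succ n
  have hcast : ((n:ℝ)+1) * ((2*(n+1)).choose (n+1) : ℝ) = 2*(2*m+1) * ((2*n).choose n : ℝ) := by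
    have : ((n+1) * Nat.centralBinom (n+1) : ℝ) = (2 * (2*n+1) * Nat.centralBinom n : ℝ) := by
      exact_mod_cast congrArg (Nat.cast : ℕ → ℝ) hnat
    unfold Nat.centralBinom at this
    push_cast at this ⊢
    linarith
  have hc : ((2*(n+1)).choose (n+1) : ℝ) = ((2*n).choose n : ℝ) * (2*(2*m+1)) / (m+1) := by
    field_simp at hcast ⊢
    linarith
  have hlogC : Real.log ((2*(n+1)).choose (n+1) : ℝ)
      = Real.log ((2*n).choose n : ℝ) + (Real.log 2 + Real.log (2*m+1)) - Real.log (m+1) := by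
    rw [hc, Real.log_div (by positivity) (by linarith), Real.log_mul (by positivity) (by positivity),
      Real.log_mul (by norm_num) (by positivity)]
  have hlog4 : Real.log 4 = 2 * Real.log 2 := by
    rw [show (4:ℝ) = 2^2 by norm_num, Real.log_pow]; push_cast; ring
  have hlogpi1 : Real.log (Real.pi * (m+1)) = Real.log Real.pi + Real.log (m+1) :=
    Real.log_mul (by positivity) (by linarith)
  have hlogpi0 : Real.log (Real.pi * m) = Real.log Real.pi + Real.log m :=
    Real.log_mul (by positivity) (by linarith)
  have hlogu : Real.log (1 - u) = 2*Real.log 2 + Real.log m + Real.log (m+1) - 2*Real.log (2*m+1) := by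
    have he : (1:ℝ) - u = (2*m) * (2*(m+1)) / ((2*m+1)^2) := by
      rw [hudef]; field_simp; ring
    rw [he, Real.log_div (by positivity) (by positivity),
      Real.log_mul (by positivity) (by positivity),
      Real.log_mul (by positivity) (by positivity),
      Real.log_mul (by norm_num) (by linarith), Real.log_pow]
    push_cast; ring
  have hub := log_one_sub_lb hu0 hu1
  have hpoly : 1/(8*m) - 1/(8*(m+1)) - 1/(192*m^3) + 1/(192*(m+1)^3)
      ≤ (1/2)*(u + u^2/2 + u^3/3 + u^4/4) := by
    have hN : (0:ℝ) ≤ 384*m^8+1536*m^7+2664*m^6+2616*m^5+1584*m^4+600*m^3+139*m^2+19*m+1 := by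
      positivity
    have hD : (0:ℝ) < 192*m^3*(m+1)^3*(2*m+1)^8 := by positivity
    have heq : (1/2)*(u + u^2/2 + u^3/3 + u^4/4)
        - (1/(8*m) - 1/(8*(m+1)) - 1/(192*m^3) + 1/(192*(m+1)^3))
        = (384*m^8+1536*m^7+2664*m^6+2616*m^5+1584*m^4+600*m^3+139*m^2+19*m+1)
          / (192*m^3*(m+1)^3*(2*m+1)^8) := by
      rw [hudef]; field_simp; ring
    have := div_nonneg hN hD.le
    linarith [heq ▸ this]
  unfold gseq
  push_cast
  rw [hlogC, hlogpi1, hlogpi0, hlog4]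
  have h1 : -(1/2) * Real.log (1-u) ≥ (1/2)*(u + u^2/2 + u^3/3 + u^4/4) := by linarith
  rw [hlogu] at h1
  linarith

lemma gform (n : ℕ) (hn : 1 ≤ n) :
    gseq n = Real.log (stirlingSeq (2*n) / (stirlingSeq n)^2) + (1/2)*Real.log Real.pi
      + 1/(8*(n:ℝ)) - 1/(192*(n:ℝ)^3) := by
  obtain ⟨k, rfl⟩ : ∃ k, n = k + 1 := ⟨n-1, by omega⟩
  have hs1 : 0 < stirlingSeq (k+1) := stirlingSeq'_pos k
  have hs2 : 0 < stirlingSeq (2*(k+1)) := by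
    have := stirlingSeq'_pos (2*k+1)
    rwa [show 2*k+1+1 = 2*(k+1) by ring] at this
  set n := k + 1 with hndef
  have hq : Real.log (stirlingSeq (2*n) / (stirlingSeq n)^2)
      = Real.log (stirlingSeq (2*n)) - 2 * Real.log (stirlingSeq n) := by
    rw [Real.log_div hs2.ne' (by positivity), Real.log_pow]
    push_cast; ring
  have hf2 := log_stirlingSeq_formula (2*n)
  have hf1 := log_stirlingSeq_formula n
  have hC : (((2*n).factorial : ℕ) : ℝ) = ((2*n).choose n : ℝ) * (n.factorial : ℝ) * (n.factorial : ℝ) := by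
    have h := Nat.choose_mul_factorial_mul_factorial (show n ≤ 2*n by omega)
    rw [show 2*n - n = n by omega] at h
    exact_mod_cast h.symm
  have hCpos : (0:ℝ) < ((2*n).choose n : ℝ) := by
    exact_mod_cast Nat.choose_pos (by omega)
  have hFpos : (0:ℝ) < (n.factorial : ℝ) := by exact_mod_cast n.factorial_pos
  have hlogC : Real.log ((2*n).choose n : ℝ)
      = Real.log ((2*n).factorial : ℝ) - 2 * Real.log (n.factorial : ℝ) := by
    rw [hC, Real.log_mul (by positivity) hFpos.ne', Real.log_mul hCpos.ne' hFpos.ne']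
    ring
  have hm0' : (0:ℝ) < (n:ℝ) := by exact_mod_cast (by omega : 0 < n)
  have E1 : Real.log (2*((2:ℝ)*(n:ℝ))) = 2*Real.log 2 + Real.log (n:ℝ) := by
    rw [show (2:ℝ)*(2*(n:ℝ)) = 2*2*(n:ℝ) by ring, Real.log_mul (by norm_num) hm0'.ne',
      Real.log_mul (by norm_num) (by norm_num)]
    ring
  have E2 : Real.log ((2:ℝ)*(n:ℝ)/Real.exp 1) = Real.log 2 + Real.log (n:ℝ) - 1 := by
    rw [Real.log_div (by positivity) (Real.exp_pos 1).ne', Real.log_mul (by norm_num) hm0'.ne',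
      Real.log_exp]
  have E3 : Real.log ((2:ℝ)*(n:ℝ)) = Real.log 2 + Real.log (n:ℝ) :=
    Real.log_mul (by norm_num) hm0'.ne'
  have E4 : Real.log ((n:ℝ)/Real.exp 1) = Real.log (n:ℝ) - 1 := by
    rw [Real.log_div hm0'.ne' (Real.exp_pos 1).ne', Real.log_exp]
  have E5 : Real.log (Real.pi * (n:ℝ)) = Real.log Real.pi + Real.log (n:ℝ) :=
    Real.log_mul Real.pi_pos.ne' hm0'.ne'
  have E6 : Real.log (4:ℝ) = 2 * Real.log 2 := by
    rw [show (4:ℝ) = 2^2 by norm_num, Real.log_pow]; push_cast; ring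
  unfold gseq
  rw [hq, hlogC, hf2, hf1, E5, E6]
  push_cast at E1 E2 E3 E4 ⊢
  rw [E1, E2, E3, E4]
  ring

lemma gtend : Tendsto (fun k : ℕ => gseq (k+1)) atTop (𝓝 0) := by
  have hsp : Tendsto stirlingSeq atTop (𝓝 (Real.sqrt Real.pi)) := tendsto_stirlingSeq_sqrt_pi
  have hdouble : Tendsto (fun n : ℕ => 2*n) atTop atTop :=
    tendsto_atTop_mono (fun n => by simp only [id_eq]; omega) tendsto_id
  have h2 : Tendsto (fun n : ℕ => stirlingSeq (2*n)) atTop (𝓝 (Real.sqrt Real.pi)) :=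
    hsp.comp hdouble
  have hspi : (0:ℝ) < Real.sqrt Real.pi := Real.sqrt_pos.mpr Real.pi_pos
  have hqt : Tendsto (fun n:ℕ => stirlingSeq (2*n) / (stirlingSeq n)^2) atTop
      (𝓝 (Real.sqrt Real.pi / (Real.sqrt Real.pi)^2)) :=
    h2.div (hsp.pow 2) (by positivity)
  have hlq : Tendsto (fun n:ℕ => Real.log (stirlingSeq (2*n) / (stirlingSeq n)^2)) atTop
      (𝓝 (Real.log (Real.sqrt Real.pi / (Real.sqrt Real.pi)^2))) :=
    (Real.continuousAt_log (by positivity)).tendsto.comp hqt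
  have hlim : Real.log (Real.sqrt Real.pi / (Real.sqrt Real.pi)^2) = -(1/2) * Real.log Real.pi := by
    rw [show Real.sqrt Real.pi / (Real.sqrt Real.pi)^2 = (Real.sqrt Real.pi)⁻¹ by
      field_simp, Real.log_inv, Real.log_sqrt Real.pi_pos.le]
    ring
  rw [hlim] at hlq
  have hbase : Tendsto (fun k : ℕ => ((k:ℝ)+1)) atTop atTop :=
    tendsto_natCast_atTop_atTop.atTop_add tendsto_const_nhds
  have ht1 : Tendsto (fun k : ℕ => 1/(8*((k:ℝ)+1))) atTop (𝓝 0) := by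
    simp only [one_div]
    exact (Tendsto.const_mul_atTop (by norm_num : (0:ℝ) < 8) hbase).inv_tendsto_atTop
  have ht2 : Tendsto (fun k : ℕ => 1/(192*((k:ℝ)+1)^3)) atTop (𝓝 0) := by
    simp only [one_div]
    exact (Tendsto.const_mul_atTop (by norm_num : (0:ℝ) < 192)
      ((tendsto_pow_atTop (by norm_num : 3 ≠ 0)).comp hbase)).inv_tendsto_atTop
  have hsub : Tendsto (fun k : ℕ =>
      Real.log (stirlingSeq (2*(k+1)) / (stirlingSeq (k+1))^2) + (1/2)*Real.log Real.pi
        + 1/(8*((k:ℝ)+1)) - 1/(192*((k:ℝ)+1)^3)) atTop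
      (𝓝 ((-(1/2) * Real.log Real.pi + (1/2)*Real.log Real.pi + 0) - 0)) :=
    (((hlq.comp (tendsto_add_atTop_nat 1)).add tendsto_const_nhds).add ht1).sub ht2
  have hfun : (fun k : ℕ => gseq (k+1)) = fun k : ℕ =>
      Real.log (stirlingSeq (2*(k+1)) / (stirlingSeq (k+1))^2) + (1/2)*Real.log Real.pi
        + 1/(8*((k:ℝ)+1)) - 1/(192*((k:ℝ)+1)^3) := by
    funext k
    have := gform (k+1) (by omega)
    push_cast at this
    convert this using 2
  rw [hfun]
  convert hsub using 2
  ring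

theorem stmt4 (n : ℕ) (hn : 0 < n) :
    ((2 * n).choose n : ℝ) ≤ 4 ^ n / Real.sqrt (Real.pi * n) *
      Real.exp (-1 / (8 * n) + 1 / (192 * n ^ 3)) := by
  have hmon : Monotone (fun k : ℕ => gseq (k+1)) :=
    monotone_nat_of_le_succ (fun k => gseq_mono (k+1) (by omega))
  have hle : gseq n ≤ 0 := by
    obtain ⟨k, rfl⟩ : ∃ k, n = k + 1 := ⟨n-1, by omega⟩
    exact hmon.ge_of_tendsto gtend k
  have hm0 : (0:ℝ) < (n:ℝ) := by exact_mod_cast hn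
  have hCpos : (0:ℝ) < ((2*n).choose n : ℝ) := by
    exact_mod_cast Nat.choose_pos (by omega)
  unfold gseq at hle
  have hlog : Real.log ((2*n).choose n : ℝ)
      ≤ (n:ℝ) * Real.log 4 + (-(1/2) * Real.log (Real.pi * n))
        + (-1/(8*(n:ℝ)) + 1/(192*(n:ℝ)^3)) := by
    have h8 : -1/(8*(n:ℝ)) = -(1/(8*(n:ℝ))) := by ring
    linarith
  have hexp := (Real.log_le_iff_le_exp hCpos).mp hlog
  rw [Real.exp_add, Real.exp_add] at hexp
  have e1 : Real.exp ((n:ℝ) * Real.log 4) = 4 ^ n := by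
    rw [Real.exp_nat_mul, Real.exp_log (by norm_num : (0:ℝ) < 4)]
  have e2 : Real.exp (-(1/2) * Real.log (Real.pi * n)) = (Real.sqrt (Real.pi * n))⁻¹ := by
    rw [show -(1/2) * Real.log (Real.pi * (n:ℝ)) = -(Real.log (Real.pi * (n:ℝ)) / 2) by ring,
      ← Real.log_sqrt (by positivity), ← Real.log_inv, Real.exp_log (by positivity)]
  rw [e1, e2] at hexp
  calc ((2*n).choose n : ℝ) ≤ 4 ^ n * (Real.sqrt (Real.pi * n))⁻¹
        * Real.exp (-1/(8*(n:ℝ)) + 1/(192*(n:ℝ)^3)) := hexp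
    _ = 4 ^ n / Real.sqrt (Real.pi * n) * Real.exp (-1 / (8 * n) + 1 / (192 * n ^ 3)) := by
        ring
end

section
/- For every positive integer n, the n-th Catalan number satisfies Cₙ < (4^n / ((n+1)·√(π n))) · exp(-1/(8n) + 1/(192 n³)). -/
open Stirling Real Filter Finset

noncomputable def gg (x : ℝ) : ℝ := 1/(12*x) - 1/(360*x^3) + 1/(1260*x^5)
noncomputable def ff (x : ℝ) : ℝ := gg x - 1/(1680*x^7)

lemma D_upper (m : ℕ) :
    Real.log (stirlingSeq (m+1)) - Real.log (stirlingSeq (m+2)) ≤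
      gg ((m:ℝ)+1) - gg ((m:ℝ)+2) := by
  have S := Stirling.log_stirlingSeq_diff_hasSum m
  set D := Real.log (stirlingSeq (m+1)) - Real.log (stirlingSeq (m+2)) with hD
  set v : ℝ := (1 / (2 * ((m+1:ℕ):ℝ) + 1)) ^ 2 with hv
  have hm0 : (0:ℝ) ≤ (m:ℝ) := Nat.cast_nonneg m
  have hveq : v = (1/(2*(m:ℝ)+3))^2 := by rw [hv]; push_cast; ring_nf
  have hv0 : 0 ≤ v := by rw [hveq]; positivity
  have hv1 : v < 1 := by
    rw [hveq, div_pow, one_pow, div_lt_one (by positivity)]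
    nlinarith
  set a : ℕ → ℝ := fun k => (1:ℝ) / (2 * ((k+1:ℕ):ℝ) + 1) * v ^ (k+1) with ha
  have Sa : HasSum a D := S
  have S2 : HasSum (fun k : ℕ => a (k + 2)) (D - ∑ i ∈ range 2, a i) :=
    (hasSum_nat_add_iff (f := a) 2).mpr (by rwa [sub_add_cancel])
  have G : HasSum (fun k : ℕ => v^3/7 * v ^ k) (v^3/7 * (1-v)⁻¹) :=
    (hasSum_geometric_of_lt_one hv0 hv1).mul_left _
  have htail : D - ∑ i ∈ range 2, a i ≤ v^3/7 * (1-v)⁻¹ := by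
    refine hasSum_le (fun k => ?_) S2 G
    have h7 : (7:ℝ) ≤ 2 * ((k+2+1:ℕ):ℝ) + 1 := by push_cast; nlinarith [Nat.cast_nonneg (α := ℝ) k]
    have : (1:ℝ) / (2 * ((k+2+1:ℕ):ℝ) + 1) ≤ 1/7 :=
      one_div_le_one_div_of_le (by norm_num) h7
    calc a (k+2) ≤ 1/7 * v ^ (k+2+1) := mul_le_mul_of_nonneg_right this (by positivity)
      _ = v^3/7 * v ^ k := by ring
  have hpart : ∑ i ∈ range 2, a i = v/3 + v^2/5 := by
    rw [Finset.sum_range_succ, Finset.sum_range_one, ha]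
    norm_num
    ring
  have hDle : D ≤ v/3 + v^2/5 + v^3/7 * (1-v)⁻¹ := by linarith
  refine hDle.trans ?_
  have key : gg ((m:ℝ)+1) - gg ((m:ℝ)+2) - (v/3 + v^2/5 + v^3/7 * (1-v)⁻¹) =
      (1818 + 7326 * (m:ℝ)^1 + 12279 * (m:ℝ)^2 + 10959 * (m:ℝ)^3 + 5494 * (m:ℝ)^4
        + 1467 * (m:ℝ)^5 + 163 * (m:ℝ)^6) /
      (2520 * ((m:ℝ)+1)^5 * ((m:ℝ)+2)^5 * (2*(m:ℝ)+3)^4) := by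
    have h1m : (1:ℝ) - v = (4*((m:ℝ)+1)*((m:ℝ)+2))/(2*(m:ℝ)+3)^2 := by
      rw [hveq]; field_simp; ring
    rw [gg, gg, h1m, hveq]
    field_simp
    ring
  have hpos : (0:ℝ) ≤ (1818 + 7326 * (m:ℝ)^1 + 12279 * (m:ℝ)^2 + 10959 * (m:ℝ)^3
      + 5494 * (m:ℝ)^4 + 1467 * (m:ℝ)^5 + 163 * (m:ℝ)^6) /
      (2520 * ((m:ℝ)+1)^5 * ((m:ℝ)+2)^5 * (2*(m:ℝ)+3)^4) := by positivity
  linarith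

lemma D_lower (m : ℕ) :
    ff ((m:ℝ)+1) - ff ((m:ℝ)+2) ≤
      Real.log (stirlingSeq (m+1)) - Real.log (stirlingSeq (m+2)) := by
  have S := Stirling.log_stirlingSeq_diff_hasSum m
  set D := Real.log (stirlingSeq (m+1)) - Real.log (stirlingSeq (m+2)) with hD
  set v : ℝ := (1 / (2 * ((m+1:ℕ):ℝ) + 1)) ^ 2 with hv
  have hm0 : (0:ℝ) ≤ (m:ℝ) := Nat.cast_nonneg m
  have hveq : v = (1/(2*(m:ℝ)+3))^2 := by rw [hv]; push_cast; ring_nf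
  have hv0 : 0 ≤ v := by rw [hveq]; positivity
  set a : ℕ → ℝ := fun k => (1:ℝ) / (2 * ((k+1:ℕ):ℝ) + 1) * v ^ (k+1) with ha
  have Sa : HasSum a D := S
  have hlow : ∑ i ∈ range 4, a i ≤ D := by
    refine sum_le_hasSum (range 4) (fun i _ => ?_) Sa
    have : (0:ℝ) < 2 * ((i+1:ℕ):ℝ) + 1 := by positivity
    positivity
  have hpart : ∑ i ∈ range 4, a i = v/3 + v^2/5 + v^3/7 + v^4/9 := by
    rw [Finset.sum_range_succ, Finset.sum_range_succ, Finset.sum_range_succ,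
      Finset.sum_range_one, ha]
    norm_num
    ring
  have key : (v/3 + v^2/5 + v^3/7 + v^4/9) - (ff ((m:ℝ)+1) - ff ((m:ℝ)+2)) =
      (1289677 + 10270491 * (m:ℝ)^1 + 37500629 * (m:ℝ)^2 + 83015811 * (m:ℝ)^3
        + 124093893 * (m:ℝ)^4 + 131961375 * (m:ℝ)^5 + 102363667 * (m:ℝ)^6
        + 58362444 * (m:ℝ)^7 + 24273702 * (m:ℝ)^8 + 7182390 * (m:ℝ)^9
        + 1435166 * (m:ℝ)^10 + 173880 * (m:ℝ)^11 + 9660 * (m:ℝ)^12) /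
      (5040 * ((m:ℝ)+1)^7 * ((m:ℝ)+2)^7 * (2*(m:ℝ)+3)^8) := by
    rw [ff, ff, gg, gg, hveq]
    field_simp
    ring
  have hpos : (0:ℝ) ≤ (1289677 + 10270491 * (m:ℝ)^1 + 37500629 * (m:ℝ)^2 + 83015811 * (m:ℝ)^3
        + 124093893 * (m:ℝ)^4 + 131961375 * (m:ℝ)^5 + 102363667 * (m:ℝ)^6
        + 58362444 * (m:ℝ)^7 + 24273702 * (m:ℝ)^8 + 7182390 * (m:ℝ)^9
        + 1435166 * (m:ℝ)^10 + 173880 * (m:ℝ)^11 + 9660 * (m:ℝ)^12) /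
      (5040 * ((m:ℝ)+1)^7 * ((m:ℝ)+2)^7 * (2*(m:ℝ)+3)^8) := by positivity
  linarith

lemma gg_nonneg {x : ℝ} (hx : 1 ≤ x) : 0 ≤ gg x := by
  have hx0 : 0 < x := by linarith
  have key : gg x = (210*x^4 - 7*x^2 + 2)/(2520*x^5) := by rw [gg]; field_simp; ring
  rw [key]
  apply div_nonneg _ (by positivity)
  nlinarith [sq_nonneg x, sq_nonneg (x^2-1)]

lemma tele_upper (n K : ℕ) :
    Real.log (stirlingSeq (n+1)) - Real.log (stirlingSeq (n+K+1)) ≤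
      gg ((n:ℝ)+1) - gg (((n+K:ℕ):ℝ)+1) := by
  induction K with
  | zero => simp
  | succ K ih =>
    have h := D_upper (n+K)
    have e1 : n+(K+1)+1 = (n+K)+2 := by omega
    have e2 : (((n+(K+1):ℕ)):ℝ)+1 = ((n+K:ℕ):ℝ)+2 := by push_cast; ring
    rw [e1, e2]
    have e3 : n+K+1 = (n+K)+1 := by omega
    rw [e3] at ih
    linarith

lemma tele_lower (n K : ℕ) :
    ff ((n:ℝ)+1) - ff (((n+K:ℕ):ℝ)+1) ≤
      Real.log (stirlingSeq (n+1)) - Real.log (stirlingSeq (n+K+1)) := by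
  induction K with
  | zero => simp
  | succ K ih =>
    have h := D_lower (n+K)
    have e1 : n+(K+1)+1 = (n+K)+2 := by omega
    have e2 : (((n+(K+1):ℕ)):ℝ)+1 = ((n+K:ℕ):ℝ)+2 := by push_cast; ring
    rw [e1, e2]
    have e3 : n+K+1 = (n+K)+1 := by omega
    rw [e3] at ih
    linarith

lemma ff_tendsto : Filter.Tendsto ff atTop (nhds 0) := by
  have hpow : ∀ j : ℕ, j ≠ 0 → ∀ c : ℝ, 0 < c →
      Filter.Tendsto (fun x : ℝ => 1/(c*x^j)) atTop (nhds 0) := by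
    intro j hj c hc
    exact tendsto_const_nhds.div_atTop ((tendsto_pow_atTop hj).const_mul_atTop hc)
  have h1 := hpow 1 one_ne_zero 12 (by norm_num)
  have h3 := hpow 3 (by norm_num) 360 (by norm_num)
  have h5 := hpow 5 (by norm_num) 1260 (by norm_num)
  have h7 := hpow 7 (by norm_num) 1680 (by norm_num)
  have := ((h1.sub h3).add h5).sub h7
  rw [show (0:ℝ) = 0 - 0 + 0 - 0 by norm_num]
  exact this.congr fun x => by unfold ff gg; ring

lemma log_s_tendsto (n : ℕ) :
    Filter.Tendsto (fun K : ℕ => Real.log (stirlingSeq (n+K+1))) atTop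
      (nhds (Real.log (Real.sqrt Real.pi))) := by
  have hne : Real.sqrt Real.pi ≠ 0 := ne_of_gt (Real.sqrt_pos.2 Real.pi_pos)
  have hidx : Filter.Tendsto (fun K : ℕ => n+K+1) atTop atTop :=
    tendsto_atTop_mono (fun K => by simp only [id_eq]; omega) tendsto_id
  exact (Real.continuousAt_log hne).tendsto.comp
    (Stirling.tendsto_stirlingSeq_sqrt_pi.comp hidx)

lemma A_le (m : ℕ) :
    Real.log (stirlingSeq (m+1)) - Real.log (Real.sqrt Real.pi) ≤ gg ((m:ℝ)+1) := by
  have hlim : Filter.Tendsto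
      (fun K : ℕ => Real.log (stirlingSeq (m+1)) - Real.log (stirlingSeq (m+K+1))) atTop
      (nhds (Real.log (stirlingSeq (m+1)) - Real.log (Real.sqrt Real.pi))) :=
    tendsto_const_nhds.sub (log_s_tendsto m)
  refine le_of_tendsto hlim (Filter.Eventually.of_forall fun K => ?_)
  have h := tele_upper m K
  have hg : 0 ≤ gg (((m+K:ℕ):ℝ)+1) := gg_nonneg (by push_cast; linarith [Nat.cast_nonneg (α := ℝ) (m+K)])
  linarith

lemma A_ge (m : ℕ) :
    ff ((m:ℝ)+1) ≤ Real.log (stirlingSeq (m+1)) - Real.log (Real.sqrt Real.pi) := by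
  have hff : Filter.Tendsto (fun K : ℕ => ff (((m+K:ℕ):ℝ)+1)) atTop (nhds 0) := by
    have hidx : Filter.Tendsto (fun K : ℕ => ((m+K:ℕ):ℝ)+1) atTop atTop := by
      apply tendsto_atTop_add_const_right
      exact tendsto_natCast_atTop_atTop.comp (tendsto_atTop_mono (fun K => by simp only [id_eq]; omega) tendsto_id)
    exact ff_tendsto.comp hidx
  have hlhs : Filter.Tendsto
      (fun K : ℕ => ff ((m:ℝ)+1) - ff (((m+K:ℕ):ℝ)+1)) atTop
      (nhds (ff ((m:ℝ)+1))) := by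
    simpa using tendsto_const_nhds.sub hff
  have hrhs : Filter.Tendsto
      (fun K : ℕ => Real.log (stirlingSeq (m+1)) - Real.log (stirlingSeq (m+K+1))) atTop
      (nhds (Real.log (stirlingSeq (m+1)) - Real.log (Real.sqrt Real.pi))) :=
    tendsto_const_nhds.sub (log_s_tendsto m)
  exact le_of_tendsto_of_tendsto' hlhs hrhs (fun K => tele_lower m K)

lemma cb_eq (n : ℕ) (hn : 0 < n) :
    (Nat.centralBinom n : ℝ) =
      stirlingSeq (2*n) / (stirlingSeq n)^2 * (4^n / Real.sqrt n) := by
  have hn1 : (1:ℝ) ≤ (n:ℝ) := by exact_mod_cast hn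
  have hnR : (0:ℝ) < (n:ℝ) := by linarith
  have hA0 : (0:ℝ) < Real.sqrt (2*(n:ℝ)) * ((n:ℝ)/Real.exp 1)^n := by
    apply mul_pos (Real.sqrt_pos.2 (by linarith)); positivity
  have hB0 : (0:ℝ) < Real.sqrt (2*((2*n:ℕ):ℝ)) * (((2*n:ℕ):ℝ)/Real.exp 1)^(2*n) := by
    push_cast
    apply mul_pos (Real.sqrt_pos.2 (by linarith)); positivity
  have hs : stirlingSeq n = (n.factorial : ℝ) / (Real.sqrt (2*(n:ℝ)) * ((n:ℝ)/Real.exp 1)^n) := rfl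
  have hs2 : stirlingSeq (2*n) =
      ((2*n).factorial : ℝ) / (Real.sqrt (2*((2*n:ℕ):ℝ)) * (((2*n:ℕ):ℝ)/Real.exp 1)^(2*n)) := rfl
  have hfac : (0:ℝ) < (n.factorial : ℝ) := by exact_mod_cast n.factorial_pos
  have hcb : (Nat.centralBinom n : ℝ) * ((n.factorial : ℝ) * (n.factorial : ℝ))
      = ((2*n).factorial : ℝ) := by
    have h := Nat.choose_mul_factorial_mul_factorial (show n ≤ 2*n by omega)
    rw [show 2*n - n = n by omega] at h
    rw [Nat.centralBinom]
    have h2 := congrArg (Nat.cast (R := ℝ)) h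
    push_cast at h2
    linarith
  have hsq : Real.sqrt (n:ℝ) * Real.sqrt (n:ℝ) = (n:ℝ) := Real.mul_self_sqrt (le_of_lt hnR)
  have hsqpos : 0 < Real.sqrt (n:ℝ) := Real.sqrt_pos.2 hnR
  have key : (Real.sqrt (2*(n:ℝ)) * ((n:ℝ)/Real.exp 1)^n)^2 * 4^n
      = (Real.sqrt (2*((2*n:ℕ):ℝ)) * (((2*n:ℕ):ℝ)/Real.exp 1)^(2*n)) * Real.sqrt (n:ℝ) := by
    have e1 : (Real.sqrt (2*(n:ℝ)) * ((n:ℝ)/Real.exp 1)^n)^2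
        = 2*(n:ℝ) * (((n:ℝ)/Real.exp 1)^n)^2 := by
      rw [mul_pow, Real.sq_sqrt (by linarith)]
    have e2 : Real.sqrt (2*((2*n:ℕ):ℝ)) * (((2*n:ℕ):ℝ)/Real.exp 1)^(2*n)
        = 2*Real.sqrt (n:ℝ) * (4^n * (((n:ℝ)/Real.exp 1)^n)^2) := by
      push_cast
      have h4 : (2:ℝ)*(2*(n:ℝ)) = 2^2 * (n:ℝ) := by ring
      rw [h4, Real.sqrt_mul (by positivity : (0:ℝ) ≤ 2^2),
        Real.sqrt_sq (by norm_num : (0:ℝ) ≤ 2)]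
      have h5 : (2*(n:ℝ)/Real.exp 1)^(2*n) = 2^(2*n) * ((n:ℝ)/Real.exp 1)^(2*n) := by
        rw [← mul_pow]; ring_nf
      have h6 : ((n:ℝ)/Real.exp 1)^(2*n) = (((n:ℝ)/Real.exp 1)^n)^2 := by
        rw [← pow_mul]; ring_nf
      have h7 : (2:ℝ)^(2*n) = 4^n := by
        rw [pow_mul]; norm_num
      rw [h5, h6, h7]
    rw [e1, e2]
    linear_combination (-(2*(4:ℝ)^n*(((n:ℝ)/Real.exp 1)^n)^2)) * hsq
  have hcb' : (Nat.centralBinom n : ℝ)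
      = ((2*n).factorial : ℝ)/((n.factorial:ℝ)*(n.factorial:ℝ)) := by
    rw [eq_div_iff (by positivity)]; exact hcb
  have hBval : Real.sqrt (2*((2*n:ℕ):ℝ)) * (((2*n:ℕ):ℝ)/Real.exp 1)^(2*n)
      = (Real.sqrt (2*(n:ℝ)) * ((n:ℝ)/Real.exp 1)^n)^2 * 4^n / Real.sqrt (n:ℝ) := by
    rw [eq_div_iff (ne_of_gt hsqpos)]; linarith [key]
  rw [hcb', hs, hs2, hBval]
  field_simp

theorem stmt8 (n : ℕ) (hn : 0 < n) :
    (catalan n : ℝ) < 4 ^ n / ((n + 1) * Real.sqrt (Real.pi * n)) *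
      Real.exp (-1 / (8 * n) + 1 / (192 * n ^ 3)) := by
  obtain ⟨k, rfl⟩ : ∃ k, n = k + 1 := ⟨n-1, by omega⟩
  have hπ : 0 < Real.pi := Real.pi_pos
  have hsp : 0 < Real.sqrt Real.pi := Real.sqrt_pos.2 hπ
  set x : ℝ := (k:ℝ) + 1 with hx
  have hx1 : (1:ℝ) ≤ x := by rw [hx]; linarith [Nat.cast_nonneg (α := ℝ) k]
  have hx0 : (0:ℝ) < x := by linarith
  clear_value x
  have hsn : 0 < stirlingSeq (k+1) := stirlingSeq'_pos k
  have hs2n : 0 < stirlingSeq (2*(k+1)) := by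
    rw [show 2*(k+1) = (2*k+1)+1 by ring]; exact stirlingSeq'_pos (2*k+1)
  have hsqx : 0 < Real.sqrt x := Real.sqrt_pos.2 hx0
  -- log bounds
  have hA2 : Real.log (stirlingSeq (2*(k+1))) - Real.log (Real.sqrt Real.pi) ≤ gg (2*x) := by
    have h := A_le (2*k+1)
    rw [show (2*k+1)+1 = 2*(k+1) by ring] at h
    rw [show ((2*k+1:ℕ):ℝ)+1 = 2*x from by rw [hx]; push_cast; ring] at h
    exact h
  have hA1 : ff x ≤ Real.log (stirlingSeq (k+1)) - Real.log (Real.sqrt Real.pi) := by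
    have h := A_ge k; rwa [← hx] at h
  set E : ℝ := -1/(8*x) + 1/(192*x^3) with hE
  clear_value E
  have hrat : gg (2*x) - 2 * ff x < E := by
    have hdiff : E - (gg (2*x) - 2*ff x) = (21*x^2 - 16)/(13440*x^7) := by
      rw [hE]; unfold ff gg; field_simp; ring
    have hp : (0:ℝ) < (21*x^2 - 16)/(13440*x^7) := by
      apply div_pos (by nlinarith) (by positivity)
    linarith
  have hlog : Real.log (stirlingSeq (2*(k+1))) + Real.log (Real.sqrt Real.pi)
      - 2 * Real.log (stirlingSeq (k+1)) < E := by linarith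
  have hexp : stirlingSeq (2*(k+1)) * Real.sqrt Real.pi
      < stirlingSeq (k+1)^2 * Real.exp E := by
    have e1 : stirlingSeq (2*(k+1)) * Real.sqrt Real.pi
        = Real.exp (Real.log (stirlingSeq (2*(k+1))) + Real.log (Real.sqrt Real.pi)) := by
      rw [Real.exp_add, Real.exp_log hs2n, Real.exp_log hsp]
    have e2 : stirlingSeq (k+1)^2 * Real.exp E
        = Real.exp (2 * Real.log (stirlingSeq (k+1)) + E) := by
      rw [Real.exp_add, show (2:ℝ) * Real.log (stirlingSeq (k+1))
        = Real.log (stirlingSeq (k+1)^2) from by rw [Real.log_pow]; push_cast; ring,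
        Real.exp_log (pow_pos hsn 2)]
    rw [e1, e2]
    exact Real.exp_lt_exp.2 (by linarith)
  have hlt : stirlingSeq (2*(k+1)) / stirlingSeq (k+1)^2 < Real.exp E / Real.sqrt Real.pi :=
    (div_lt_div_iff₀ (pow_pos hsn 2) hsp).2 (by linarith)
  -- catalan value
  have hcbe := cb_eq (k+1) hn
  have hsqcast : Real.sqrt ((k+1:ℕ):ℝ) = Real.sqrt x := by norm_num [hx]
  rw [hsqcast] at hcbe
  have hcat : (catalan (k+1) : ℝ) = (Nat.centralBinom (k+1) : ℝ) / (x+1) := by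
    have h := succ_mul_catalan_eq_centralBinom (k+1)
    have h2 := congrArg (Nat.cast (R := ℝ)) h
    push_cast at h2
    rw [eq_div_iff (by positivity)]
    rw [hx]; linarith
  have hcatval : (catalan (k+1) : ℝ)
      = stirlingSeq (2*(k+1)) / stirlingSeq (k+1)^2 * (4^(k+1)/(Real.sqrt x * (x+1))) := by
    rw [hcat, hcbe]
    field_simp
  have hrhs : (4:ℝ) ^ (k+1) / ((((k+1:ℕ):ℝ) + 1) * Real.sqrt (Real.pi * ((k+1:ℕ):ℝ))) *
        Real.exp (-1 / (8 * ((k+1:ℕ):ℝ)) + 1 / (192 * ((k+1:ℕ):ℝ) ^ 3))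
      = Real.exp E / Real.sqrt Real.pi * (4^(k+1)/(Real.sqrt x * (x+1))) := by
    rw [show ((k+1:ℕ):ℝ) = x from by rw [hx]; push_cast; ring,
      Real.sqrt_mul hπ.le, ← hE]
    have hx1' : x + 1 ≠ 0 := by positivity
    field_simp
  rw [hcatval, hrhs]
  exact mul_lt_mul_of_pos_right hlt (div_pos (by positivity) (mul_pos hsqx (by linarith)))
end

section
/- For every positive integer n, C(2n, n) < (4^n / √(π n)) · exp(-1/(8n) + 1/(192 n³) - 1/(640 n⁵) + 17/(14336 n⁷)). -/
/-!
Write `G` for the exponent in the bound and `t = 1 / (8n² + 8n + 1)`. The squared ratio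
`R n = C(2n, n)² π n / 16ⁿ` satisfies `R (n + 1) / R n = (2n + 1)² / (4n(n + 1)) = (1 + t) / (1 - t)`,
and `R n → 1` by Wallis' product. Since `½ log ((1 + t) / (1 - t)) ≥ t + t³ / 3 > G (n + 1) - G n`,
the sequence `log (R n) - 2 G n` increases strictly to its limit `0`, so it is negative,
which is the claim after exponentiating.
-/

open Real Filter Topology

noncomputable def centralBinomCorrection (x : ℝ) : ℝ :=
  -1 / (8 * x) + 1 / (192 * x ^ 3) - 1 / (640 * x ^ 5) + 17 / (14336 * x ^ 7)

lemma centralBinomCorrection_succ_sub_lt {x : ℝ} (hx : 0 < x) :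
    centralBinomCorrection (x + 1) - centralBinomCorrection x <
      1 / (8 * x ^ 2 + 8 * x + 1) + (1 / (8 * x ^ 2 + 8 * x + 1)) ^ 3 / 3 := by
  unfold centralBinomCorrection
  rw [← sub_pos]
  -- the difference is a polynomial of degree 10 in `x` with positive coefficients,
  -- divided by a positive one
  field_simp
  ring_nf
  positivity

lemma two_mul_centralBinomCorrection_succ_sub_lt_log {x : ℝ} (hx : 0 < x) :
    2 * (centralBinomCorrection (x + 1) - centralBinomCorrection x) <
      log ((2 * x + 1) ^ 2 / (4 * x * (x + 1))) := by
  set t := 1 / (8 * x ^ 2 + 8 * x + 1) with ht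
  have ht0 : 0 ≤ t := by positivity
  have ht1 : t < 1 := by rw [ht, div_lt_one (by positivity)]; nlinarith
  have hartanh : t + t ^ 3 / 3 ≤ 1 / 2 * log ((1 + t) / (1 - t)) := by
    have h := sum_range_le_log_div ht0 ht1 2
    norm_num [Finset.sum_range_succ] at h
    linarith
  have hratio : (1 + t) / (1 - t) = (2 * x + 1) ^ 2 / (4 * x * (x + 1)) := by
    rw [ht]
    field_simp
    ring
  rw [← hratio]
  linarith [centralBinomCorrection_succ_sub_lt hx]

lemma centralBinom_succ_eq (n : ℕ) :
    ((n + 1).centralBinom : ℝ) = 2 * (2 * n + 1) * n.centralBinom / (n + 1) := by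
  have hrec : ((n + 1 : ℕ) : ℝ) * (n + 1).centralBinom = 2 * (2 * n + 1) * n.centralBinom := by
    exact_mod_cast Nat.succ_mul_centralBinom_succ n
  push_cast at hrec
  rw [← hrec]
  field_simp

lemma sq_centralBinom_mul_wallis (n : ℕ) :
    (n.centralBinom : ℝ) ^ 2 * (2 * n + 1) * Wallis.W n = 16 ^ n := by
  induction n with
  | zero => simp [Wallis.W]
  | succ n ih =>
    have h1 : (2 * n + 1 : ℝ) ≠ 0 := by positivity
    have h2 : (2 * n + 3 : ℝ) ≠ 0 := by positivity
    rw [Wallis.W_succ, pow_succ (16 : ℝ), ← ih, centralBinom_succ_eq]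
    push_cast
    field_simp
    ring

noncomputable def centralBinomRatio (n : ℕ) : ℝ := (n.centralBinom : ℝ) ^ 2 * (π * n) / 16 ^ n

lemma centralBinomRatio_pos {n : ℕ} (hn : n ≠ 0) : 0 < centralBinomRatio n := by
  have := n.centralBinom_pos
  unfold centralBinomRatio
  positivity

lemma centralBinomRatio_eq_div_wallis (n : ℕ) :
    centralBinomRatio n = π * (n / (2 * n + 1)) / Wallis.W n := by
  have hW := Wallis.W_pos n
  have hC : (n.centralBinom : ℝ) ≠ 0 := by exact_mod_cast n.centralBinom_pos.ne'
  rw [centralBinomRatio, ← sq_centralBinom_mul_wallis n]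
  field_simp

lemma tendsto_centralBinomRatio : Tendsto centralBinomRatio atTop (𝓝 1) := by
  have h := (Stirling.tendsto_self_div_two_mul_self_add_one.const_mul π).div
    Wallis.tendsto_W_nhds_pi_div_two (by positivity)
  rw [show π * (1 / 2) / (π / 2) = 1 by field_simp] at h
  exact h.congr fun n ↦ (centralBinomRatio_eq_div_wallis n).symm

lemma centralBinomRatio_succ {n : ℕ} (hn : n ≠ 0) :
    centralBinomRatio (n + 1) =
      centralBinomRatio n * ((2 * n + 1) ^ 2 / (4 * n * (n + 1))) := by
  have hn' : (n : ℝ) ≠ 0 := by exact_mod_cast hn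
  rw [centralBinomRatio, centralBinomRatio, centralBinom_succ_eq, pow_succ (16 : ℝ)]
  push_cast
  field_simp
  ring

lemma tendsto_centralBinomCorrection :
    Tendsto (fun n : ℕ ↦ centralBinomCorrection n) atTop (𝓝 0) := by
  have hpoly : Continuous fun u : ℝ ↦ -u / 8 + u ^ 3 / 192 - u ^ 5 / 640 + 17 * u ^ 7 / 14336 := by
    fun_prop
  have h := (hpoly.tendsto 0).comp (tendsto_inv_atTop_zero.comp tendsto_natCast_atTop_atTop)
  norm_num at h
  refine h.congr fun n ↦ ?_
  simp only [Function.comp_apply, centralBinomCorrection]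
  field_simp

noncomputable def centralBinomLogError (n : ℕ) : ℝ :=
  log (centralBinomRatio n) - 2 * centralBinomCorrection n

lemma centralBinomLogError_lt_succ {n : ℕ} (hn : n ≠ 0) :
    centralBinomLogError n < centralBinomLogError (n + 1) := by
  have hx : (0 : ℝ) < n := by positivity
  have hratio : (0 : ℝ) < (2 * n + 1) ^ 2 / (4 * n * (n + 1)) := by positivity
  rw [centralBinomLogError, centralBinomLogError, centralBinomRatio_succ hn,
    log_mul (centralBinomRatio_pos hn).ne' hratio.ne', Nat.cast_succ]
  linarith [two_mul_centralBinomCorrection_succ_sub_lt_log hx]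

lemma tendsto_centralBinomLogError : Tendsto centralBinomLogError atTop (𝓝 0) := by
  have h := (tendsto_centralBinomRatio.log one_ne_zero).sub
    (tendsto_centralBinomCorrection.const_mul 2)
  rwa [log_one, mul_zero, sub_zero] at h

lemma centralBinomLogError_neg {n : ℕ} (hn : n ≠ 0) : centralBinomLogError n < 0 := by
  obtain ⟨m, rfl⟩ := Nat.exists_eq_succ_of_ne_zero hn
  have hmono : StrictMono fun k ↦ centralBinomLogError (k + 1) :=
    strictMono_nat_of_lt_succ fun k ↦ centralBinomLogError_lt_succ k.succ_ne_zero
  have hlim : Tendsto (fun k ↦ centralBinomLogError (k + 1)) atTop (𝓝 0) :=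
    (tendsto_add_atTop_iff_nat 1).mpr tendsto_centralBinomLogError
  exact (hmono m.lt_succ_self).trans_le (hmono.monotone.ge_of_tendsto hlim _)

theorem stmt10 (n : ℕ) (hn : 0 < n) :
    ((2 * n).choose n : ℝ) < 4 ^ n / Real.sqrt (Real.pi * n) *
      Real.exp (-1 / (8 * n) + 1 / (192 * n ^ 3) - 1 / (640 * n ^ 5) + 17 / (14336 * n ^ 7)) := by
  have hlog := centralBinomLogError_neg hn.ne'
  rw [centralBinomLogError, sub_neg, log_lt_iff_lt_exp (centralBinomRatio_pos hn.ne'),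
    centralBinomRatio, div_lt_iff₀ (by positivity)] at hlog
  have hpi : 0 < π * n := by positivity
  have h16 : ((4 : ℝ) ^ n) ^ 2 = 16 ^ n := by rw [← pow_mul, mul_comm, pow_mul]; norm_num
  rw [← Nat.centralBinom_eq_two_mul_choose]
  change _ < _ * exp (centralBinomCorrection n)
  rw [← pow_lt_pow_iff_left₀ (by positivity) (by positivity) two_ne_zero, mul_pow, div_pow,
    sq_sqrt hpi.le, h16, ← exp_nat_mul, div_mul_eq_mul_div, lt_div_iff₀ hpi]
  push_cast
  linarith
end

section
/- For every positive integer n, the n-th Catalan number satisfies Cₙ ≤ (4^n / ((n+1)·√(π n))) · exp(23/(36n)). -/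
open Real Stirling Nat Filter

lemma sqrt_pi_le_stirlingSeq' (n : ℕ) : Real.sqrt π ≤ stirlingSeq (n + 1) := by
  have h : Filter.Tendsto (stirlingSeq ∘ Nat.succ) Filter.atTop (nhds (Real.sqrt π)) :=
    (Filter.tendsto_add_atTop_iff_nat 1).mpr tendsto_stirlingSeq_sqrt_pi
  exact stirlingSeq'_antitone.le_of_tendsto h n

lemma centralBinom_le_real (n : ℕ) (hn : 0 < n) :
    (Nat.centralBinom n : ℝ) ≤ 4 ^ n / Real.sqrt (π * n) := by
  obtain ⟨m, rfl⟩ : ∃ m, n = m + 1 := ⟨n - 1, by omega⟩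
  set k := m + 1 with hk
  set x : ℝ := (k : ℝ) with hx
  have hkpos : (0 : ℝ) < x := by positivity
  have he : (0 : ℝ) < Real.exp 1 := Real.exp_pos 1
  set a := stirlingSeq k with ha
  set b := stirlingSeq (2 * k) with hb
  set p : ℝ := (x / Real.exp 1) ^ k with hp
  have hapos : 0 < a := stirlingSeq'_pos m
  have hbpos : 0 < b := by
    have h2 : 2 * k = (2 * m + 1) + 1 := by omega
    rw [hb, h2]; exact stirlingSeq'_pos _
  have hba : b ≤ a := by
    have h2 : 2 * k = (2 * m + 1) + 1 := by omega
    rw [hb, h2, ha]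
    exact stirlingSeq'_antitone (show m ≤ 2 * m + 1 by omega)
  have hpa : Real.sqrt π ≤ a := sqrt_pi_le_stirlingSeq' m
  have hppos : 0 < p := by rw [hp]; positivity
  have hfan : (Real.sqrt (2 * x) * p) ≠ 0 := by positivity
  have hfa : (k ! : ℝ) = a * (Real.sqrt (2 * x) * p) := by
    rw [ha, hp, stirlingSeq, div_mul_cancel₀]
    rw [hp] at hfan; exact hfan
  have hfbn : (Real.sqrt (2 * (2 * x)) * ((2 * x) / Real.exp 1) ^ (2 * k)) ≠ 0 := by positivity
  have hc2 : ((2 * k : ℕ) : ℝ) = 2 * x := by push_cast [hx]; ring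
  have hfb : ((2 * k)! : ℝ) = b * (Real.sqrt (2 * (2 * x)) * ((2 * x) / Real.exp 1) ^ (2 * k)) := by
    rw [hb, stirlingSeq, hc2, div_mul_cancel₀ _ hfbn]
  have hC : (Nat.centralBinom k : ℝ) * ((k ! : ℝ) * (k ! : ℝ)) = ((2 * k)! : ℝ) := by
    have h := Nat.choose_mul_factorial_mul_factorial (show k ≤ 2 * k by omega)
    rw [show 2 * k - k = k by omega] at h
    rw [Nat.centralBinom, ← mul_assoc]
    exact_mod_cast h
  have hsx : (0 : ℝ) < Real.sqrt x := Real.sqrt_pos.mpr hkpos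
  have hs2x : Real.sqrt (2 * (2 * x)) = 2 * Real.sqrt x := by
    rw [show 2 * (2 * x) = 2 ^ 2 * x by ring, Real.sqrt_mul (by positivity),
      Real.sqrt_sq (by norm_num)]
  have hsq : Real.sqrt (2 * x) ^ 2 = 2 * x := Real.sq_sqrt (by positivity)
  have hxx : Real.sqrt x * Real.sqrt x = x := Real.mul_self_sqrt (le_of_lt hkpos)
  have hpow : ((2 * x) / Real.exp 1) ^ (2 * k) = 4 ^ k * p ^ 2 := by
    rw [hp]
    calc ((2 * x) / Real.exp 1) ^ (2 * k)
        = (2 * (x / Real.exp 1)) ^ (2 * k) := by ring_nf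
      _ = 2 ^ (2 * k) * (x / Real.exp 1) ^ (2 * k) := mul_pow _ _ _
      _ = 4 ^ k * ((x / Real.exp 1) ^ k) ^ 2 := by
          rw [pow_mul, pow_mul']; norm_num
  rw [hfa, hfb, hs2x, hpow] at hC
  have hz : ((Nat.centralBinom k : ℝ) * a ^ 2 * Real.sqrt x - b * 4 ^ k)
      * (2 * Real.sqrt x * p ^ 2) = 0 := by
    linear_combination hC + (Nat.centralBinom k : ℝ) * a ^ 2 * p ^ 2 * (2 * hxx - hsq)
  have key : (Nat.centralBinom k : ℝ) * a ^ 2 * Real.sqrt x = b * 4 ^ k := by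
    rcases mul_eq_zero.mp hz with h | h
    · linarith
    · exfalso; have : (0:ℝ) < 2 * Real.sqrt x * p ^ 2 := by positivity
      linarith
  have hid : (Nat.centralBinom k : ℝ) = b / a ^ 2 * 4 ^ k / Real.sqrt x := by
    field_simp
    linear_combination key
  rw [hid, Real.sqrt_mul Real.pi_pos.le]
  have hsp : (0:ℝ) < Real.sqrt π := Real.sqrt_pos.mpr Real.pi_pos
  have hfrac : b / a ^ 2 ≤ 1 / Real.sqrt π := by
    rw [div_le_div_iff₀ (by positivity) hsp]
    nlinarith [hba, hpa, hbpos.le, hsp.le]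
  calc b / a ^ 2 * 4 ^ k / Real.sqrt x
      ≤ (1 / Real.sqrt π) * 4 ^ k / Real.sqrt x := by gcongr
    _ = 4 ^ k / (Real.sqrt π * Real.sqrt x) := by
        field_simp
    _ ≤ 4 ^ k / (Real.sqrt π * Real.sqrt x) := le_refl _

theorem stmt11 (n : ℕ) (hn : 0 < n) :
    (catalan n : ℝ) ≤ 4 ^ n / ((n + 1) * Real.sqrt (Real.pi * n)) *
      Real.exp (23 / (36 * n)) := by
  have hcat : ((n : ℝ) + 1) * (catalan n : ℝ) = (Nat.centralBinom n : ℝ) := by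
    exact_mod_cast congrArg (Nat.cast (R := ℝ)) (succ_mul_catalan_eq_centralBinom n)
  have hn1 : (0:ℝ) < (n:ℝ) + 1 := by positivity
  have hc : (catalan n : ℝ) = (Nat.centralBinom n : ℝ) / ((n:ℝ) + 1) := by
    field_simp
    linarith [hcat]
  have hcb := centralBinom_le_real n hn
  have hs : (0:ℝ) < Real.sqrt (π * n) := Real.sqrt_pos.mpr (by positivity)
  have hexp : (1:ℝ) ≤ Real.exp (23 / (36 * n)) := by
    apply Real.one_le_exp; positivity
  calc (catalan n : ℝ) = (Nat.centralBinom n : ℝ) / ((n:ℝ) + 1) := hc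
    _ ≤ (4 ^ n / Real.sqrt (π * n)) / ((n:ℝ) + 1) := by gcongr
    _ = 4 ^ n / (((n:ℝ) + 1) * Real.sqrt (π * n)) := by
        rw [div_div]; ring_nf
    _ ≤ 4 ^ n / (((n:ℝ) + 1) * Real.sqrt (π * n)) * Real.exp (23 / (36 * n)) := by
        exact le_mul_of_one_le_right (by positivity) hexp
end

section
/- For every positive integer n, exp(-1/(8n)) < C(2n, n)·√(π n)/4^n < exp(-1/(8n) + 1/(192 n³)). -/
open Nat hiding log log_pow
open Real Filter Topology Stirling

/-!
Write `a n` for the normalized central binomial coefficient and `r n = log (a n) + 1 / (8 n)`.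
Stirling's formula gives `a n → 1`, hence `r n → 0`. The recurrence
`(n + 1) C(2n+2, n+1) = 2 (2n + 1) C(2n, n)` gives `(a (n+1) / a n)² = 1 + t` with
`t = 1 / (4 n (n + 1))`, so `r n - r (n+1) = (t - log (1 + t)) / 2`, which lies strictly between
`0` and `t² / 4 ≤ 1 / (192 n³) - 1 / (192 (n+1)³)`. Thus both `r n` and `1 / (192 n³) - r n`
decrease strictly to `0`, so both are positive.
-/

noncomputable def normalizedCentralBinom (n : ℕ) : ℝ :=
  centralBinom n * √(π * n) / 4 ^ n

lemma normalizedCentralBinom_pos {n : ℕ} (hn : n ≠ 0) : 0 < normalizedCentralBinom n := by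
  unfold normalizedCentralBinom
  have := centralBinom_pos n
  positivity

lemma normalizedCentralBinom_eq_stirlingSeq {n : ℕ} (hn : n ≠ 0) :
    normalizedCentralBinom n = stirlingSeq (2 * n) * √π / stirlingSeq n ^ 2 := by
  have hfac : ((2 * n)! : ℝ) = centralBinom n * n ! * n ! := by
    rw [centralBinom_eq_two_mul_choose, two_mul]
    exact_mod_cast (add_choose_mul_factorial_mul_factorial n n).symm
  have h4n : √(2 * (2 * n : ℕ) : ℝ) = 2 * √(n : ℝ) := by
    rw [show (2 * (2 * n : ℕ) : ℝ) = 2 ^ 2 * n by push_cast; ring, sqrt_mul (by norm_num),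
      sqrt_sq (by norm_num)]
  have hpow : ((2 * n : ℕ) / exp 1 : ℝ) ^ (2 * n) = 4 ^ n * ((n / exp 1) ^ n) ^ 2 := by
    rw [← pow_mul, mul_comm n 2, pow_mul, pow_mul, ← mul_pow]
    push_cast; ring
  simp only [normalizedCentralBinom, stirlingSeq, hfac, h4n, hpow, div_pow, mul_pow,
    sqrt_mul pi_pos.le, sqrt_mul zero_le_two, sq_sqrt zero_le_two]
  have : 0 < √(n : ℝ) := by positivity
  have : (0 : ℝ) < n ! := by positivity
  field_simp

lemma tendsto_normalizedCentralBinom : Tendsto normalizedCentralBinom atTop (𝓝 1) := by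
  have hπ : √π ≠ 0 := (sqrt_pos.mpr pi_pos).ne'
  have h2n : Tendsto (fun n : ℕ ↦ stirlingSeq (2 * n)) atTop (𝓝 √π) :=
    tendsto_stirlingSeq_sqrt_pi.comp (tendsto_id.const_mul_atTop' two_pos)
  have hlim := (h2n.mul_const √π).div (tendsto_stirlingSeq_sqrt_pi.pow 2) (pow_ne_zero 2 hπ)
  rw [← sq, div_self (pow_ne_zero 2 hπ)] at hlim
  refine hlim.congr' ?_
  filter_upwards [eventually_ne_atTop 0] with n hn
  exact (normalizedCentralBinom_eq_stirlingSeq hn).symm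

lemma normalizedCentralBinom_succ_div_sq {n : ℕ} (hn : n ≠ 0) :
    (normalizedCentralBinom (n + 1) / normalizedCentralBinom n) ^ 2 =
      1 + 1 / (4 * n * (n + 1)) := by
  have hrec : (centralBinom (n + 1) : ℝ) = 2 * (2 * n + 1) * centralBinom n / (n + 1) := by
    rw [eq_div_iff (by positivity), mul_comm]
    exact_mod_cast succ_mul_centralBinom_succ n
  have : (0 : ℝ) < centralBinom n := by exact_mod_cast centralBinom_pos n
  have : (0 : ℝ) < n := by positivity
  simp only [normalizedCentralBinom, hrec, div_pow, mul_pow,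
    sq_sqrt (by positivity : (0 : ℝ) ≤ π * n),
    sq_sqrt (by positivity : (0 : ℝ) ≤ π * (n + 1 : ℕ))]
  field_simp
  push_cast
  ring

lemma sub_log_one_add_lt {x : ℝ} (hx : 0 < x) : x - log (1 + x) < x ^ 2 / 2 := by
  have hpade : x - 2 * x / (x + 2) = x ^ 2 / (x + 2) := by field_simp; ring
  have : x ^ 2 / (x + 2) < x ^ 2 / 2 := div_lt_div_of_pos_left (by positivity) two_pos (by linarith)
  linarith [lt_log_one_add_of_pos hx]

theorem lt_of_tendsto_of_succ_lt {α : Type*} [TopologicalSpace α] [Preorder α]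
    [OrderClosedTopology α] {f : ℕ → α} {a : α} {n : ℕ} (hf : ∀ m, n ≤ m → f (m + 1) < f m)
    (hlim : Tendsto f atTop (𝓝 a)) : a < f n := by
  have hanti : Antitone (fun k ↦ f (k + n)) :=
    antitone_nat_of_succ_le fun k ↦ (add_right_comm k 1 n ▸ hf (k + n) le_add_self).le
  exact (hanti.le_of_tendsto (hlim.comp (tendsto_add_atTop_nat n)) 1).trans_lt
    (add_comm n 1 ▸ hf n le_rfl)

noncomputable def centralBinomRemainder (n : ℕ) : ℝ :=
  log (normalizedCentralBinom n) + 1 / (8 * n)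

lemma tendsto_centralBinomRemainder : Tendsto centralBinomRemainder atTop (𝓝 0) := by
  have hlog := ((continuousAt_log one_ne_zero).tendsto.comp tendsto_normalizedCentralBinom)
  rw [log_one] at hlog
  have hlim := hlog.add ((tendsto_inv_atTop_nhds_zero_nat (𝕜 := ℝ)).const_mul (1 / 8))
  rw [mul_zero, add_zero] at hlim
  refine hlim.congr fun n ↦ ?_
  simp only [centralBinomRemainder, Function.comp_apply]
  ring

lemma centralBinomRemainder_sub_succ {n : ℕ} (hn : n ≠ 0) :
    centralBinomRemainder n - centralBinomRemainder (n + 1) =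
      (1 / (4 * n * (n + 1)) - log (1 + 1 / (4 * n * (n + 1)))) / 2 := by
  have hlog : log (normalizedCentralBinom (n + 1)) - log (normalizedCentralBinom n) =
      log (1 + 1 / (4 * n * (n + 1))) / 2 := by
    rw [← log_div (normalizedCentralBinom_pos n.succ_ne_zero).ne'
      (normalizedCentralBinom_pos hn).ne', ← normalizedCentralBinom_succ_div_sq hn, log_pow]
    ring
  have : (0 : ℝ) < n := by positivity
  have hrecip : 1 / (8 * n : ℝ) - 1 / (8 * (n + 1)) = 1 / (4 * n * (n + 1)) / 2 := by
    field_simp; ring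
  simp only [centralBinomRemainder]
  push_cast
  linarith

lemma centralBinomRemainder_succ_lt {n : ℕ} (hn : n ≠ 0) :
    centralBinomRemainder (n + 1) < centralBinomRemainder n := by
  have ht : (0 : ℝ) < 1 / (4 * n * (n + 1)) := by positivity
  have := log_lt_sub_one_of_pos (by positivity : 0 < 1 + 1 / (4 * n * (n + 1) : ℝ))
    (by linarith : (1 : ℝ) < 1 + _).ne'
  linarith [centralBinomRemainder_sub_succ hn]

lemma centralBinomRemainder_sub_succ_lt {n : ℕ} (hn : n ≠ 0) :
    centralBinomRemainder n - centralBinomRemainder (n + 1) <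
      1 / (192 * n ^ 3) - 1 / (192 * (n + 1 : ℕ) ^ 3) := by
  have : (0 : ℝ) < n := by positivity
  have hsq : (1 / (4 * n * (n + 1)) : ℝ) ^ 2 / 4 ≤
      1 / (192 * n ^ 3) - 1 / (192 * (n + 1) ^ 3) := by
    rw [div_sub_div _ _ (by positivity) (by positivity), div_pow, div_div,
      div_le_div_iff₀ (by positivity) (by positivity)]
    nlinarith
  have := sub_log_one_add_lt (by positivity : (0 : ℝ) < 1 / (4 * n * (n + 1)))
  rw [centralBinomRemainder_sub_succ hn]
  push_cast
  linarith

lemma centralBinomRemainder_pos {n : ℕ} (hn : n ≠ 0) : 0 < centralBinomRemainder n :=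
  lt_of_tendsto_of_succ_lt (fun _ hm ↦ centralBinomRemainder_succ_lt (by omega))
    tendsto_centralBinomRemainder

lemma centralBinomRemainder_lt {n : ℕ} (hn : n ≠ 0) :
    centralBinomRemainder n < 1 / (192 * n ^ 3) := by
  have hcube : Tendsto (fun m : ℕ ↦ 1 / (192 * (m : ℝ) ^ 3)) atTop (𝓝 0) := by
    have := ((tendsto_inv_atTop_nhds_zero_nat (𝕜 := ℝ)).pow 3).const_mul (1 / 192)
    rw [zero_pow three_ne_zero, mul_zero] at this
    exact this.congr fun m ↦ by simp only [inv_pow]; ring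
  have hgap := lt_of_tendsto_of_succ_lt (n := n)
    (fun m hm ↦ by linarith [centralBinomRemainder_sub_succ_lt (n := m) (by omega)])
    (sub_zero (0 : ℝ) ▸ hcube.sub tendsto_centralBinomRemainder)
  linarith

theorem stmt18 (n : ℕ) (hn : 0 < n) :
    Real.exp (-1 / (8 * n)) < ((2 * n).choose n : ℝ) * Real.sqrt (Real.pi * n) / 4 ^ n ∧
      ((2 * n).choose n : ℝ) * Real.sqrt (Real.pi * n) / 4 ^ n <
        Real.exp (-1 / (8 * n) + 1 / (192 * n ^ 3)) := by
  have hrep : normalizedCentralBinom n = exp (centralBinomRemainder n - 1 / (8 * n)) := by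
    rw [centralBinomRemainder, add_sub_cancel_right, exp_log (normalizedCentralBinom_pos hn.ne')]
  change exp _ < normalizedCentralBinom n ∧ normalizedCentralBinom n < exp _
  rw [hrep, neg_div]
  exact ⟨exp_lt_exp.mpr (by linarith [centralBinomRemainder_pos hn.ne']),
    exp_lt_exp.mpr (by linarith [centralBinomRemainder_lt hn.ne'])⟩
end
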